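/- arXiv:0809.2392 — 3 statements merged into one kernel-verified Lean document; each statement's English description precedes it below -/
import Mathlib

section
/- The concatenation map ⋈_k, restricted to pairs of fermionic states (f_-, f_+) with N_+(f_-) ≤ k and N_-(f_+) ≥ -k, is injective, and its image is exactly the set of states f: ℤ+1/2 → {-1,0,+1} with N_{-0}(f) ≥ 0 and N_{+0}(f) ≤ 0 (i.e. all green particles lie to the left of all red particles, separated by zeroes around the origin). -/
open scoped Classical

/-- Sign of the half-integer `m + 1/2` (an integer `m : ℤ` encodes the half-integer `m + 1/2`). -/
def sgnZ (m : ℤ) : ℤ := if 0 ≤ m then 1 else -1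

/-- A fermionic (Maya) state: values in `{-1, 1}`, `-1` far left, `+1` far right. -/
def IsFermionic (f : ℤ → ℤ) : Prop :=
  (∀ m, f m = -1 ∨ f m = 1) ∧ (∃ N : ℤ, ∀ m, m < N → f m = -1) ∧
    (∃ N : ℤ, ∀ m, N < m → f m = 1)

/-- A state of the tiling-model Fock space `𝒢`: values in `{-1, 0, 1}`,
`-1` far left, `+1` far right. -/
def IsGState (f : ℤ → ℤ) : Prop :=
  (∀ m, f m = -1 ∨ f m = 0 ∨ f m = 1) ∧ (∃ N : ℤ, ∀ m, m < N → f m = -1) ∧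
    (∃ N : ℤ, ∀ m, N < m → f m = 1)

/-- The charge of `f` is `c`: the (eventually constant) sums
`∑_{i = -M-1/2}^{M-1/2} (f i - sign i)` equal `c` for all large `M`. -/
def ChargeIs (f : ℤ → ℤ) (c : ℤ) : Prop :=
  ∃ N : ℕ, ∀ M : ℕ, N ≤ M →
    (∑ m ∈ Finset.Icc (-(M : ℤ)) ((M : ℤ) - 1), (f m - sgnZ m)) = c

/-- The Maya diagram (edge sequence of the 45°-rotated boundary) of a partition:
`f (m) = -1` iff the half-integer `m + 1/2` equals `λ_j - j + 1/2` for some `j ≥ 1`. -/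
noncomputable def mayaOf (l : ℕ → ℕ) : ℤ → ℤ := fun m =>
  if ∃ j : ℕ, (l j : ℤ) - ((j : ℤ) + 1) = m then -1 else 1

/-- Concatenation `f₋ ⋈ₖ f₊` of two fermionic states with shift `k`. -/
noncomputable def concatAt (k : ℤ) (g h : ℤ → ℤ) : ℤ → ℤ := fun m =>
  if m < 0 then (g (m + k) - 1) / 2 else (h (m - k) + 1) / 2

/-- the concatenation `⋈ₖ`, restricted to pairs of fermionic states
`(f₋, f₊)` with `N₊(f₋) ≤ k` and `N₋(f₊) ≥ -k`, is injective, with image exactly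
the set of states `f : ℤ+1/2 → {-1,0,1}` with `N_{-0}(f) ≥ 0` and `N_{+0}(f) ≤ 0`
(no red particle left of the origin, no green particle right of it). -/
theorem concat_bijection (k : ℤ) :
    Set.BijOn (fun p : (ℤ → ℤ) × (ℤ → ℤ) => concatAt k p.1 p.2)
      {p : (ℤ → ℤ) × (ℤ → ℤ) | IsFermionic p.1 ∧ IsFermionic p.2 ∧
        (∀ m : ℤ, k ≤ m → p.1 m = 1) ∧ (∀ m : ℤ, m < -k → p.2 m = -1)}
      {f : ℤ → ℤ | IsGState f ∧ (∀ m : ℤ, m < 0 → f m ≠ 1) ∧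
        (∀ m : ℤ, 0 ≤ m → f m ≠ -1)} := by
  refine ⟨?_, ?_, ?_⟩
  · -- MapsTo
    rintro ⟨g, h⟩ ⟨⟨hg01, ⟨Ng, hNg⟩, _⟩, ⟨hh01, _, ⟨Nh, hNh⟩⟩, hgk, hhk⟩
    dsimp only at hg01 hNg hh01 hNh hgk hhk
    refine ⟨⟨?_, ⟨min (Ng - k) 0, ?_⟩, ⟨max (Nh + k) 0, ?_⟩⟩, ?_, ?_⟩
    · intro m
      simp only [concatAt]
      split
      · rcases hg01 (m + k) with e | e <;> rw [e] <;> omega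
      · rcases hh01 (m - k) with e | e <;> rw [e] <;> omega
    · intro m hm
      simp only [concatAt]
      have hm0 : m < 0 := lt_of_lt_of_le hm (min_le_right _ _)
      rw [if_pos hm0, hNg (m + k) (by omega)]
      decide
    · intro m hm
      simp only [concatAt]
      have hm0 : ¬ m < 0 := by
        have := le_max_right (Nh + k) 0; omega
      rw [if_neg hm0, hNh (m - k) (by have := le_max_left (Nh + k) 0; omega)]
      decide
    · intro m hm
      simp only [concatAt, if_pos hm]
      rcases hg01 (m + k) with e | e <;> rw [e] <;> omega
    · intro m hm
      simp only [concatAt, if_neg (not_lt.mpr hm)]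
      rcases hh01 (m - k) with e | e <;> rw [e] <;> omega
  · -- InjOn
    rintro ⟨g1, h1⟩ ⟨⟨hg1, _, _⟩, ⟨hh1, _, _⟩, hgk1, hhk1⟩
      ⟨g2, h2⟩ ⟨⟨hg2, _, _⟩, ⟨hh2, _, _⟩, hgk2, hhk2⟩ heq
    dsimp only at hg1 hh1 hgk1 hhk1 hg2 hh2 hgk2 hhk2
    simp only [Prod.mk.injEq]
    constructor
    · funext n
      by_cases hn : n < k
      · have := congrFun heq (n - k)
        simp only [concatAt, if_pos (show n - k < 0 by omega)] at this
        rw [show n - k + k = n by ring] at this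
        rcases hg1 n with e1 | e1 <;> rcases hg2 n with e2 | e2 <;>
          rw [e1, e2] at this ⊢ <;> omega
      · rw [hgk1 n (by omega), hgk2 n (by omega)]
    · funext n
      by_cases hn : n < -k
      · rw [hhk1 n hn, hhk2 n hn]
      · have := congrFun heq (n + k)
        simp only [concatAt, if_neg (show ¬ n + k < 0 by omega)] at this
        rw [show n + k - k = n by ring] at this
        rcases hh1 n with e1 | e1 <;> rcases hh2 n with e2 | e2 <;>
          rw [e1, e2] at this ⊢ <;> omega
  · -- SurjOn
    rintro f ⟨⟨hf01, ⟨Nl, hNl⟩, ⟨Nr, hNr⟩⟩, hfneg, hfpos⟩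
    refine ⟨(fun n => if n < k then 2 * f (n - k) + 1 else 1,
             fun n => if -k ≤ n then 2 * f (n + k) - 1 else -1), ⟨⟨?_, ?_, ?_⟩, ⟨?_, ?_, ?_⟩, ?_, ?_⟩, ?_⟩
    · intro n
      dsimp only
      split
      · rename_i hn
        have h1 := hfneg (n - k) (by omega)
        rcases hf01 (n - k) with e | e | e <;> omega
      · omega
    · refine ⟨min (Nl + k) k, fun n hn => ?_⟩
      dsimp only
      rw [if_pos (by omega), hNl (n - k) (by omega)]
      norm_num
    · exact ⟨k, fun n hn => by dsimp only; rw [if_neg (by omega)]⟩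
    · intro n
      dsimp only
      split
      · rename_i hn
        have h1 := hfpos (n + k) (by omega)
        rcases hf01 (n + k) with e | e | e <;> omega
      · omega
    · exact ⟨-k, fun n hn => by dsimp only; rw [if_neg (by omega)]⟩
    · refine ⟨max (Nr - k) (-k), fun n hn => ?_⟩
      dsimp only
      have h1 := le_max_left (Nr - k) (-k)
      have h2 := le_max_right (Nr - k) (-k)
      rw [if_pos (by omega), hNr (n + k) (by omega)]
      norm_num
    · intro m hm
      dsimp only
      rw [if_neg (by omega)]
    · intro m hm
      dsimp only
      rw [if_neg (by omega)]
    · funext m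
      simp only [concatAt]
      split
      · rename_i hm
        rw [if_pos (by omega), show m + k - k = m by ring]
        omega
      · rename_i hm
        rw [if_pos (by omega), show m - k + k = m by ring]
        omega
end

section
/- If f = f_- ⋈ f_+ is a state in which all green particles (-1's) lie to the left of the origin and all red particles (+1's) to the right (N_+(f_-) ≤ 0 and N_-(f_+) ≥ 0), then under the two-row tiling transfer matrix T², the evolution is deterministic: T^{2k}|f⟩ = |f_-⟩ ⋈_k |f_+⟩ for all k ≥ 0, i.e. each green particle moves one step left and each red particle one step right per double time-step, with no branching. -/
open scoped Classical

/-- The non-shaded tiles (`α`, `β`) of the `T₊`-type row, as admissible rhombi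
`(left, bottom, right, top)` with edge labels `-1 = '-'`, `1 = '+'`, `0 = '0'`. -/
def PTiles : List (ℤ × ℤ × ℤ × ℤ) :=
  [(-1, -1, -1, -1), (-1, 1, 1, 0), (-1, 1, 0, -1), (-1, 0, -1, 0), (1, -1, 1, -1),
   (1, 1, 1, 1), (1, 0, -1, 1), (0, -1, -1, 1), (0, 1, 0, 1)]

def allowedP (a b c d : ℤ) : Prop := (a, b, c, d) ∈ PTiles

/-- The mirror-image tiles, used by the `T₋`-type row. -/
def allowedM (a b c d : ℤ) : Prop := allowedP (-c) (-b) (-a) (-d)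

/-- Matrix element `⟨g|T₊|h⟩`: the number of admissible rows of tiles from the
bottom configuration `h` to the top configuration `g`. -/
noncomputable def TrowP (g h : ℤ → ℤ) : ℕ :=
  Set.ncard {e : ℤ → ℤ | (∃ N : ℤ, ∀ m, m < N → e m = -1) ∧
    (∃ N : ℤ, ∀ m, N < m → e m = 1) ∧
    ∀ m : ℤ, allowedP (e m) (h m) (e (m + 1)) (g m)}

/-- Matrix element `⟨g|T₋|h⟩`. -/
noncomputable def TrowM (g h : ℤ → ℤ) : ℕ :=
  Set.ncard {e : ℤ → ℤ | (∃ N : ℤ, ∀ m, m < N → e m = -1) ∧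
    (∃ N : ℤ, ∀ m, N < m → e m = 1) ∧
    ∀ m : ℤ, allowedM (e m) (h m) (e (m + 1)) (g m)}

/-- Matrix element `⟨g|T²|f⟩` of the two-row transfer matrix `T² = T₊ T₋`. -/
noncomputable def Tsq (g f : ℤ → ℤ) : ℕ := ∑ᶠ h : ℤ → ℤ, TrowP g h * TrowM h f

/-- Matrix element `⟨g|T^{2k}|f⟩`. -/
noncomputable def Tpow : ℕ → (ℤ → ℤ) → (ℤ → ℤ) → ℕ
  | 0, g, f => if g = f then 1 else 0
  | (k + 1), g, f => ∑ᶠ h : ℤ → ℤ, Tsq g h * Tpow k h f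

def SepSt (f : ℤ → ℤ) : Prop :=
  (∀ m : ℤ, m < 0 → f m = -1 ∨ f m = 0) ∧ (∀ m : ℤ, 0 ≤ m → f m = 0 ∨ f m = 1) ∧
  (∃ N : ℤ, ∀ m, m < N → f m = -1) ∧ (∃ N : ℤ, ∀ m, N < m → f m = 1)

def MstepF (f : ℤ → ℤ) : ℤ → ℤ := fun m => if f (m+1) = -1 then -1 else if f m = 1 then 1 else 0
def PstepF (f : ℤ → ℤ) : ℤ → ℤ := fun m => if f m = -1 then -1 else if f (m-1) = 1 then 1 else 0
def eMF (f : ℤ → ℤ) : ℤ → ℤ := fun m => if f m = -1 then -1 else 1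
def ePF (f : ℤ → ℤ) : ℤ → ℤ := fun m => if f (m-1) = 1 then 1 else -1

lemma eM_unique {f s e : ℤ → ℤ} (hf : SepSt f)
    (hL : ∃ N : ℤ, ∀ m, m < N → e m = -1) (hR : ∃ N : ℤ, ∀ m, N < m → e m = 1)
    (ht : ∀ m : ℤ, allowedM (e m) (f m) (e (m + 1)) (s m)) :
    ∀ m, e m = eMF f m := by
  obtain ⟨hneg, hpos, -, -⟩ := hf
  obtain ⟨Ne, hNe⟩ := hL
  obtain ⟨Me, hMe⟩ := hR
  -- no zeros
  have hz : ∀ m, e m ≠ 0 := by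
    intro m hm
    have hchain : ∀ n : ℕ, e (m - n) = 0 := by
      intro n
      induction n with
      | zero => simpa using hm
      | succ n ih =>
        have h1 := ht (m - n)
        have h2 := ht (m - n - 1)
        have hpe : m - (n:ℤ) - 1 + 1 = m - n := by ring
        rw [hpe, ih] at h2
        rw [ih] at h1
        have hfa := hpos (m - n)
        have hfb := hneg (m - n - 1)
        have hgoal : m - ((n:ℕ)+1 : ℕ) = m - (n:ℤ) - 1 := by push_cast; ring
        rw [hgoal]
        simp only [allowedM, allowedP, PTiles, List.mem_cons, List.not_mem_nil,
          or_false, Prod.mk.injEq] at h1 h2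
        omega
    have hle := Int.self_le_toNat (m - Ne)
    have h1 := hchain ((m - Ne).toNat + 1)
    rw [show (m - (((m - Ne).toNat + 1 : ℕ) : ℤ)) = m - ((m - Ne).toNat : ℤ) - 1 by
      push_cast; ring] at h1
    have h2 := hNe (m - ((m - Ne).toNat : ℤ) - 1) (by omega)
    omega
  -- a red on top of a green edge propagates right forever
  have h1p : ∀ m, f m = 1 → e m = -1 → False := by
    intro m hfm hem
    have hchain : ∀ n : ℕ, f (m + n) = 1 ∧ e (m + n) = -1 := by
      intro n
      induction n with
      | zero => simpa using ⟨hfm, hem⟩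
      | succ n ih =>
        obtain ⟨hf1, he1⟩ := ih
        have h1 := ht (m + n)
        rw [hf1, he1] at h1
        have h2 := ht (m + n + 1)
        have hfa := hneg (m + n)
        have hfb := hpos (m + n + 1)
        have hfc := hneg (m + n + 1)
        have hgoal : m + ((n:ℕ)+1 : ℕ) = m + (n:ℤ) + 1 := by push_cast; ring
        rw [hgoal]
        simp only [allowedM, allowedP, PTiles, List.mem_cons, List.not_mem_nil,
          or_false, Prod.mk.injEq] at h1 h2
        omega
    have hle := Int.self_le_toNat (Me - m)
    have h1 := (hchain ((Me - m).toNat + 1)).2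
    rw [show (m + (((Me - m).toNat + 1 : ℕ) : ℤ)) = m + ((Me - m).toNat : ℤ) + 1 by
      push_cast; ring] at h1
    have h2 := hMe (m + ((Me - m).toNat : ℤ) + 1) (by omega)
    omega
  intro m
  have hk := ht m
  simp only [allowedM, allowedP, PTiles, List.mem_cons, List.not_mem_nil,
    or_false, Prod.mk.injEq] at hk
  have h0 := hz m
  have hone : ¬(f m = 1 ∧ e m = -1) := fun ⟨h1, h2⟩ => h1p m h1 h2
  unfold eMF
  split_ifs with hfm <;> omega

lemma SepSt.tri {f : ℤ → ℤ} (hf : SepSt f) (m : ℤ) : f m = -1 ∨ f m = 0 ∨ f m = 1 := by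
  rcases lt_or_ge m 0 with h | h
  · rcases hf.1 m h with h' | h' <;> tauto
  · rcases hf.2.1 m h with h' | h' <;> tauto

lemma SepSt.no_rg {f : ℤ → ℤ} (hf : SepSt f) (m : ℤ) : ¬ (f m = 1 ∧ f (m+1) = -1) := by
  rintro ⟨h1, h2⟩
  have ha := hf.1 m
  have hb := hf.2.1 (m+1)
  omega

lemma eM_tiles {f : ℤ → ℤ} (hf : SepSt f) (m : ℤ) :
    allowedM (eMF f m) (f m) (eMF f (m + 1)) (MstepF f m) := by
  have h1 := hf.tri m
  have h2 := hf.tri (m+1)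
  have h3 := hf.no_rg m
  rcases h1 with hm | hm | hm <;> rcases h2 with hm1 | hm1 | hm1 <;>
    (simp [eMF, MstepF, hm, hm1, allowedM, allowedP, PTiles]) <;> exact h3 ⟨hm, hm1⟩

lemma sM_det {f s : ℤ → ℤ} (hf : SepSt f)
    (ht : ∀ m : ℤ, allowedM (eMF f m) (f m) (eMF f (m + 1)) (s m)) :
    s = MstepF f := by
  funext m
  have hk := ht m
  have h1 := hf.tri m
  have h2 := hf.tri (m+1)
  have h3 := hf.no_rg m
  clear ht
  rcases h1 with hm | hm | hm <;> rcases h2 with hm1 | hm1 | hm1 <;>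
    (simp [eMF, MstepF, hm, hm1, allowedM, allowedP, PTiles, Prod.ext_iff] at hk ⊢) <;>
      omega

lemma eM_bdd {f : ℤ → ℤ} (hf : SepSt f) :
    (∃ N : ℤ, ∀ m, m < N → eMF f m = -1) ∧ (∃ N : ℤ, ∀ m, N < m → eMF f m = 1) := by
  obtain ⟨-, -, ⟨Nf, hNf⟩, ⟨Mf, hMf⟩⟩ := hf
  constructor
  · exact ⟨Nf, fun m hm => by simp [eMF, hNf m hm]⟩
  · refine ⟨Mf, fun m hm => ?_⟩
    have := hMf m hm
    simp [eMF]
    omega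

lemma TrowM_eq {f : ℤ → ℤ} (hf : SepSt f) (s : ℤ → ℤ) :
    TrowM s f = if s = MstepF f then 1 else 0 := by
  unfold TrowM
  split_ifs with hs
  · subst hs
    have hset : {e : ℤ → ℤ | (∃ N : ℤ, ∀ m, m < N → e m = -1) ∧
        (∃ N : ℤ, ∀ m, N < m → e m = 1) ∧
        ∀ m : ℤ, allowedM (e m) (f m) (e (m + 1)) (MstepF f m)} = {eMF f} := by
      apply Set.eq_singleton_iff_unique_mem.mpr
      refine ⟨⟨(eM_bdd hf).1, (eM_bdd hf).2, fun m => eM_tiles hf m⟩, ?_⟩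
      rintro e ⟨hl, hr, ht⟩
      funext m
      exact eM_unique hf hl hr ht m
    rw [hset, Set.ncard_singleton]
  · have hset : {e : ℤ → ℤ | (∃ N : ℤ, ∀ m, m < N → e m = -1) ∧
        (∃ N : ℤ, ∀ m, N < m → e m = 1) ∧
        ∀ m : ℤ, allowedM (e m) (f m) (e (m + 1)) (s m)} = ∅ := by
      rw [Set.eq_empty_iff_forall_notMem]
      rintro e ⟨hl, hr, ht⟩
      have he := eM_unique hf hl hr ht
      have ht' : ∀ m : ℤ, allowedM (eMF f m) (f m) (eMF f (m + 1)) (s m) := by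
        intro m
        have h := ht m
        rwa [he m, he (m+1)] at h
      exact hs (sM_det hf ht')
    rw [hset]
    simp

lemma eP_unique {f s e : ℤ → ℤ} (hf : SepSt f)
    (hL : ∃ N : ℤ, ∀ m, m < N → e m = -1) (hR : ∃ N : ℤ, ∀ m, N < m → e m = 1)
    (ht : ∀ m : ℤ, allowedP (e m) (f m) (e (m + 1)) (s m)) :
    ∀ m, e m = ePF f m := by
  obtain ⟨hneg, hpos, -, -⟩ := hf
  obtain ⟨Ne, hNe⟩ := hL
  obtain ⟨Me, hMe⟩ := hR
  -- no zeros
  have hz : ∀ m, e m ≠ 0 := by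
    intro m hm
    have hchain : ∀ n : ℕ, e (m + n) = 0 := by
      intro n
      induction n with
      | zero => simpa using hm
      | succ n ih =>
        have h1 := ht (m + n)
        have h2 := ht (m + n - 1)
        have hpe : m + (n:ℤ) - 1 + 1 = m + n := by ring
        rw [hpe, ih] at h2
        rw [ih] at h1
        have hfa := hpos (m + n)
        have hfb := hneg (m + n - 1)
        have hgoal : m + ((n:ℕ)+1 : ℕ) = m + (n:ℤ) + 1 := by push_cast; ring
        rw [hgoal]
        simp only [allowedP, PTiles, List.mem_cons, List.not_mem_nil,
          or_false, Prod.mk.injEq] at h1 h2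
        omega
    have hle := Int.self_le_toNat (Me - m)
    have h1 := hchain ((Me - m).toNat + 1)
    rw [show (m + (((Me - m).toNat + 1 : ℕ) : ℤ)) = m + ((Me - m).toNat : ℤ) + 1 by
      push_cast; ring] at h1
    have h2 := hMe (m + ((Me - m).toNat : ℤ) + 1) (by omega)
    omega
  -- e = 1 forces a red just to the left
  have hb : ∀ m, e m = 1 → f (m - 1) = 1 := by
    intro m hm
    by_contra hc
    have hchain : ∀ n : ℕ, e (m - n) = 1 ∧ f (m - n - 1) ≠ 1 := by
      intro n
      induction n with
      | zero => simpa using ⟨hm, hc⟩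
      | succ n ih =>
        obtain ⟨he1, hf1⟩ := ih
        have h2 := ht (m - n - 1)
        have hpe : m - (n:ℤ) - 1 + 1 = m - n := by ring
        rw [hpe, he1] at h2
        have hfa := hpos (m - n - 1)
        have hfb := hneg (m - n - 1 - 1)
        have hgoal1 : m - ((n:ℕ)+1 : ℕ) = m - (n:ℤ) - 1 := by push_cast; ring
        rw [hgoal1]
        simp only [allowedP, PTiles, List.mem_cons, List.not_mem_nil,
          or_false, Prod.mk.injEq] at h2
        omega
    have hle := Int.self_le_toNat (m - Ne)
    have h1 := (hchain ((m - Ne).toNat + 1)).1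
    rw [show (m - (((m - Ne).toNat + 1 : ℕ) : ℤ)) = m - ((m - Ne).toNat : ℤ) - 1 by
      push_cast; ring] at h1
    have h2 := hNe (m - ((m - Ne).toNat : ℤ) - 1) (by omega)
    omega
  intro m
  have hk := ht m
  have hk' := ht (m - 1)
  have hpe : m - 1 + 1 = m := by ring
  rw [hpe] at hk'
  have h0 := hz m
  have h0' := hz (m - 1)
  have hone : ¬(e m = 1 ∧ ¬ f (m - 1) = 1) := fun ⟨ha, hb'⟩ => hb' (hb m ha)
  simp only [allowedP, PTiles, List.mem_cons, List.not_mem_nil,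
    or_false, Prod.mk.injEq] at hk hk'
  unfold ePF
  split_ifs with hfm <;> omega

lemma eP_tiles {f : ℤ → ℤ} (hf : SepSt f) (m : ℤ) :
    allowedP (ePF f m) (f m) (ePF f (m + 1)) (PstepF f m) := by
  have h1 := hf.tri (m - 1)
  have h2 := hf.tri m
  have h3 := hf.no_rg (m - 1)
  rw [show m - 1 + 1 = m by ring] at h3
  rcases h1 with hm | hm | hm <;> rcases h2 with hm1 | hm1 | hm1 <;>
    (simp [ePF, PstepF, hm, hm1, allowedP, PTiles, add_sub_cancel_right]) <;>
      exact h3 ⟨hm, hm1⟩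

lemma sP_det {f s : ℤ → ℤ} (hf : SepSt f)
    (ht : ∀ m : ℤ, allowedP (ePF f m) (f m) (ePF f (m + 1)) (s m)) :
    s = PstepF f := by
  funext m
  have hk := ht m
  have h1 := hf.tri (m - 1)
  have h2 := hf.tri m
  have h3 := hf.no_rg (m - 1)
  rw [show m - 1 + 1 = m by ring] at h3
  clear ht
  rcases h1 with hm | hm | hm <;> rcases h2 with hm1 | hm1 | hm1 <;>
    (simp [ePF, PstepF, hm, hm1, allowedP, PTiles, Prod.ext_iff,
      add_sub_cancel_right] at hk ⊢) <;>
      omega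

lemma eP_bdd {f : ℤ → ℤ} (hf : SepSt f) :
    (∃ N : ℤ, ∀ m, m < N → ePF f m = -1) ∧ (∃ N : ℤ, ∀ m, N < m → ePF f m = 1) := by
  obtain ⟨-, -, ⟨Nf, hNf⟩, ⟨Mf, hMf⟩⟩ := hf
  constructor
  · refine ⟨Nf + 1, fun m hm => ?_⟩
    have := hNf (m - 1) (by omega)
    simp [ePF]
    omega
  · refine ⟨Mf + 1, fun m hm => ?_⟩
    have := hMf (m - 1) (by omega)
    simp [ePF, this]

lemma TrowP_eq {f : ℤ → ℤ} (hf : SepSt f) (s : ℤ → ℤ) :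
    TrowP s f = if s = PstepF f then 1 else 0 := by
  unfold TrowP
  split_ifs with hs
  · subst hs
    have hset : {e : ℤ → ℤ | (∃ N : ℤ, ∀ m, m < N → e m = -1) ∧
        (∃ N : ℤ, ∀ m, N < m → e m = 1) ∧
        ∀ m : ℤ, allowedP (e m) (f m) (e (m + 1)) (PstepF f m)} = {ePF f} := by
      apply Set.eq_singleton_iff_unique_mem.mpr
      refine ⟨⟨(eP_bdd hf).1, (eP_bdd hf).2, fun m => eP_tiles hf m⟩, ?_⟩
      rintro e ⟨hl, hr, ht⟩
      funext m
      exact eP_unique hf hl hr ht m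
    rw [hset, Set.ncard_singleton]
  · have hset : {e : ℤ → ℤ | (∃ N : ℤ, ∀ m, m < N → e m = -1) ∧
        (∃ N : ℤ, ∀ m, N < m → e m = 1) ∧
        ∀ m : ℤ, allowedP (e m) (f m) (e (m + 1)) (s m)} = ∅ := by
      rw [Set.eq_empty_iff_forall_notMem]
      rintro e ⟨hl, hr, ht⟩
      have he := eP_unique hf hl hr ht
      have ht' : ∀ m : ℤ, allowedP (ePF f m) (f m) (ePF f (m + 1)) (s m) := by
        intro m
        have h := ht m
        rwa [he m, he (m+1)] at h
      exact hs (sP_det hf ht')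
    rw [hset]
    simp

lemma SepSt_MstepF {f : ℤ → ℤ} (hf : SepSt f) : SepSt (MstepF f) := by
  obtain ⟨hneg, hpos, ⟨Nf, hNf⟩, ⟨Mf, hMf⟩⟩ := hf
  refine ⟨?_, ?_, ⟨Nf - 1, ?_⟩, ⟨Mf, ?_⟩⟩
  · intro m hm
    have h1 := hneg m hm
    simp only [MstepF]
    split_ifs <;> omega
  · intro m hm
    have h1 := hpos (m+1) (by omega)
    have h2 := hpos m hm
    simp only [MstepF]
    split_ifs <;> omega
  · intro m hm
    have h1 := hNf (m+1) (by omega)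
    simp [MstepF, h1]
  · intro m hm
    have h1 := hMf (m+1) (by omega)
    have h2 := hMf m hm
    simp [MstepF, h1, h2]

lemma Tsq_eq {f : ℤ → ℤ} (hf : SepSt f) (s : ℤ → ℤ) :
    Tsq s f = if s = PstepF (MstepF f) then 1 else 0 := by
  unfold Tsq
  rw [finsum_eq_single (fun x => TrowP s x * TrowM x f) (MstepF f)
    (fun x hx => by
      show TrowP s x * TrowM x f = 0
      rw [TrowM_eq hf, if_neg hx, mul_zero])]
  show TrowP s (MstepF f) * TrowM (MstepF f) f = _
  rw [TrowM_eq hf, if_pos rfl, mul_one, TrowP_eq (SepSt_MstepF hf)]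

lemma SepSt_concat {g h : ℤ → ℤ} (hg : IsFermionic g) (hh : IsFermionic h)
    (hg0 : ∀ m : ℤ, 0 ≤ m → g m = 1) (hh0 : ∀ m : ℤ, m < 0 → h m = -1)
    (k : ℤ) (hk : 0 ≤ k) : SepSt (concatAt k g h) := by
  obtain ⟨hgv, ⟨Ng, hNg⟩, -⟩ := hg
  obtain ⟨hhv, -, ⟨Mh, hMh⟩⟩ := hh
  refine ⟨?_, ?_, ⟨min (Ng - k) 0, ?_⟩, ⟨max (Mh + k) 0, ?_⟩⟩
  · intro m hm
    have := hgv (m + k)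
    simp only [concatAt, if_pos hm]
    omega
  · intro m hm
    have := hhv (m - k)
    simp only [concatAt, if_neg (not_lt.mpr hm)]
    omega
  · intro m hm
    have h1 := hNg (m + k) (by omega)
    have h2 : m < 0 := by omega
    simp only [concatAt, if_pos h2]
    omega
  · intro m hm
    have h1 := hMh (m - k) (by omega)
    have h2 : ¬ m < 0 := by omega
    simp only [concatAt, if_neg h2]
    omega

set_option maxHeartbeats 2000000 in
lemma PM_concat {g h : ℤ → ℤ} (hg : IsFermionic g) (hh : IsFermionic h)
    (hg0 : ∀ m : ℤ, 0 ≤ m → g m = 1) (hh0 : ∀ m : ℤ, m < 0 → h m = -1)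
    (k : ℤ) (hk : 0 ≤ k) :
    PstepF (MstepF (concatAt k g h)) = concatAt (k + 1) g h := by
  funext m
  obtain ⟨hgv, -, -⟩ := hg
  obtain ⟨hhv, -, -⟩ := hh
  have G0 := hgv (m + k)
  have G1 := hgv (m + k + 1)
  have G2 := hgv (m + k - 1)
  have H0 := hhv (m - k)
  have H1 := hhv (m - k + 1)
  have H2 := hhv (m - k - 1)
  have Ga : 0 ≤ m + k → g (m + k) = 1 := fun hx => hg0 _ hx
  have Gb : 0 ≤ m + k + 1 → g (m + k + 1) = 1 := fun hx => hg0 _ hx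
  have Gc : 0 ≤ m + k - 1 → g (m + k - 1) = 1 := fun hx => hg0 _ hx
  have Ha : m - k < 0 → h (m - k) = -1 := fun hx => hh0 _ hx
  have Hb : m - k + 1 < 0 → h (m - k + 1) = -1 := fun hx => hh0 _ hx
  have Hc : m - k - 1 < 0 → h (m - k - 1) = -1 := fun hx => hh0 _ hx
  simp only [PstepF, MstepF, concatAt,
    show m - 1 + 1 = m by ring, show m + 1 + k = m + k + 1 by ring, show m + 1 - k = m - k + 1 by ring,
    show m - 1 + k = m + k - 1 by ring, show m - 1 - k = m - k - 1 by ring,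
    show m + (k + 1) = m + k + 1 by ring, show m - (k + 1) = m - k - 1 by ring]
  have hcase : m ≤ -2 ∨ m = -1 ∨ m = 0 ∨ 1 ≤ m := by omega
  rcases hcase with hc | hc | hc | hc
  · simp only [if_pos (show m + 1 < 0 by omega), if_pos (show m < 0 by omega),
      if_pos (show m - 1 < 0 by omega)]
    split_ifs <;> first | omega | exact (‹False›).elim
  · simp only [if_neg (show ¬ m + 1 < 0 by omega), if_pos (show m < 0 by omega),
      if_pos (show m - 1 < 0 by omega)]
    split_ifs <;> first | omega | exact (‹False›).elim
  · simp only [if_neg (show ¬ m + 1 < 0 by omega), if_neg (show ¬ m < 0 by omega),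
      if_pos (show m - 1 < 0 by omega)]
    split_ifs <;> first | omega | exact (‹False›).elim
  · simp only [if_neg (show ¬ m + 1 < 0 by omega), if_neg (show ¬ m < 0 by omega),
      if_neg (show ¬ m - 1 < 0 by omega)]
    split_ifs <;> first | omega | exact (‹False›).elim


/-- if `f = f₋ ⋈ f₊` has all green particles left of the origin and
all red particles right of it (`N₊(f₋) ≤ 0`, `N₋(f₊) ≥ 0`), the evolution under
`T²` is deterministic: `T^{2k}|f⟩ = |f₋⟩ ⋈ₖ |f₊⟩` for all `k ≥ 0`. -/
theorem free_evolution_of_separated_states (g h : ℤ → ℤ)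
    (hg : IsFermionic g) (hh : IsFermionic h)
    (hg0 : ∀ m : ℤ, 0 ≤ m → g m = 1) (hh0 : ∀ m : ℤ, m < 0 → h m = -1) :
    ∀ (k : ℕ) (s : ℤ → ℤ),
      Tpow k s (concatAt 0 g h) = if s = concatAt (k : ℤ) g h then 1 else 0 := by
  intro k
  induction k with
  | zero =>
    intro s
    simp only [Tpow, Nat.cast_zero]
  | succ k ih =>
    intro s
    have hsep : SepSt (concatAt (k : ℤ) g h) :=
      SepSt_concat hg hh hg0 hh0 (k : ℤ) (by positivity)
    show (∑ᶠ x : ℤ → ℤ, Tsq s x * Tpow k x (concatAt 0 g h)) = _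
    rw [finsum_eq_single (fun x => Tsq s x * Tpow k x (concatAt 0 g h)) (concatAt (k:ℤ) g h)
      (fun x hx => by
        show Tsq s x * Tpow k x (concatAt 0 g h) = 0
        rw [ih x, if_neg hx, mul_zero])]
    show Tsq s (concatAt (k:ℤ) g h) * Tpow k (concatAt (k:ℤ) g h) (concatAt 0 g h) = _
    rw [ih, if_pos rfl, mul_one, Tsq_eq hsep, PM_concat hg hh hg0 hh0 (k:ℤ) (by positivity)]
    norm_num [Nat.cast_succ]
end

section
/- The factorial Schur function defined combinatorially as s_λ(x_1,...,x_k | y_1,...,y_n) = Σ_T ∏_{boxes b ∈ λ} (x_{T(b)} - y_{T(b)+c(b)}), summed over semistandard Young tableaux T of shape λ with entries in {1,...,k} (where c(b) = column(b) - row(b) is the content), is a symmetric function of x_1,...,x_k. -/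
open scoped Classical

/-- A partition: weakly decreasing, finitely supported sequence. -/
def IsPartition (l : ℕ → ℕ) : Prop :=
  (∀ i j : ℕ, i ≤ j → l j ≤ l i) ∧ ∃ N, ∀ j, N ≤ j → l j = 0

/-- A partition fitting inside the `k × w` rectangle (at most `k` parts, each at most `w`). -/
def InBox (k w : ℕ) (l : ℕ → ℕ) : Prop :=
  (∀ i j : ℕ, i ≤ j → l j ≤ l i) ∧ (∀ j, l j ≤ w) ∧ (∀ j, k ≤ j → l j = 0)

/-- The cells of the skew shape `hi/lo`, inside the bounding box `B × C`. -/
def cells (B C : ℕ) (lo hi : ℕ → ℕ) : Finset (ℕ × ℕ) :=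
  (Finset.range B ×ˢ Finset.range C).filter fun c => lo c.1 ≤ c.2 ∧ c.2 < hi c.1

/-- Semistandard skew Young tableaux of shape `hi/lo` with entries in `{1,…,k}`,
normalized to `0` outside the shape: weakly increasing along rows, strictly
increasing down columns. -/
def SkewSSYT (k B C : ℕ) (lo hi : ℕ → ℕ) : Set ((ℕ × ℕ) → ℕ) :=
  {T | (∀ c, c ∉ cells B C lo hi → T c = 0) ∧
       (∀ c ∈ cells B C lo hi, 1 ≤ T c ∧ T c ≤ k) ∧
       (∀ i j j', j ≤ j' → (i, j) ∈ cells B C lo hi → (i, j') ∈ cells B C lo hi →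
          T (i, j) ≤ T (i, j')) ∧
       (∀ i i' j, i < i' → (i, j) ∈ cells B C lo hi → (i', j) ∈ cells B C lo hi →
          T (i, j) < T (i', j))}

/-- The skew Schur polynomial in `k` variables `x 1, …, x k`, as a tableau sum. -/
noncomputable def skewSchur (k B C : ℕ) (lo hi : ℕ → ℕ) (x : ℕ → ℝ) : ℝ :=
  ∑ᶠ T ∈ SkewSSYT k B C lo hi, ∏ c ∈ cells B C lo hi, x (T c)

/-- The Schur polynomial `s_hi(x 1, …, x k)`. -/
noncomputable def schurP (k B C : ℕ) (hi : ℕ → ℕ) (x : ℕ → ℝ) : ℝ :=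
  skewSchur k B C (fun _ => 0) hi x

/-- The factorial (double) Schur function
`s_hi(x|y) = Σ_T Π_{b ∈ hi} (x_{T(b)} - y_{T(b) + c(b)})`, where `c(b) = col - row`. -/
noncomputable def facSchur (k B C : ℕ) (lo hi : ℕ → ℕ) (x : ℕ → ℝ) (y : ℤ → ℝ) : ℝ :=
  ∑ᶠ T ∈ SkewSSYT k B C lo hi,
    ∏ c ∈ cells B C lo hi, (x (T c) - y ((T c : ℤ) + (c.2 : ℤ) - (c.1 : ℤ)))

/-- The transpose (conjugate) of a partition. -/
noncomputable def transp (l : ℕ → ℕ) : ℕ → ℕ := fun j => Set.ncard {i : ℕ | j < l i}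

/-- The supersymmetric skew Schur function
`s_{la/mu}(u 1 … u m / v 1 … v n) = Σ_ν s_{la/ν}(u) · s_{(ν/mu)ᵀ}(v)`. -/
noncomputable def ssSkewSchur (m n B C : ℕ) (mu la : ℕ → ℕ) (u v : ℕ → ℝ) : ℝ :=
  ∑ᶠ nu ∈ {nu : ℕ → ℕ | IsPartition nu ∧ ∀ j, mu j ≤ nu j ∧ nu j ≤ la j},
    skewSchur m B C nu la u * skewSchur n C B (transp mu) (transp nu) v

namespace FacSchurProof

open Finset

variable {k w i : ℕ} {lam : ℕ → ℕ}

/-! ### Shape basics -/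

lemma mem_cells (hlam : InBox k w lam) {p : ℕ × ℕ} :
    p ∈ cells k w (fun _ => 0) lam ↔ p.1 < k ∧ p.2 < lam p.1 := by
  unfold cells
  simp only [Finset.mem_filter, Finset.mem_product, Finset.mem_range]
  constructor
  · rintro ⟨⟨h1, _⟩, _, h4⟩; exact ⟨h1, h4⟩
  · rintro ⟨h1, h2⟩
    exact ⟨⟨h1, lt_of_lt_of_le h2 (hlam.2.1 p.1)⟩, Nat.zero_le _, h2⟩

lemma cells_mono (hlam : InBox k w lam) {r r' c c' : ℕ}
    (h : (r, c) ∈ cells k w (fun _ => 0) lam) (hr : r' ≤ r) (hc : c' ≤ c) :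
    (r', c') ∈ cells k w (fun _ => 0) lam := by
  rw [mem_cells hlam] at h ⊢
  exact ⟨lt_of_le_of_lt hr h.1, lt_of_le_of_lt hc (h.2.trans_le (hlam.1 r' r hr))⟩

/-! ### Tableau basics -/

section Tableau

variable {T : (ℕ × ℕ) → ℕ} (hT : T ∈ SkewSSYT k k w (fun _ => 0) lam)

lemma tmem (hT : T ∈ SkewSSYT k k w (fun _ => 0) lam) {p : ℕ × ℕ} (h : T p ≠ 0) :
    p ∈ cells k w (fun _ => 0) lam := by
  by_contra hc; exact h (hT.1 p hc)

lemma trow (hT : T ∈ SkewSSYT k k w (fun _ => 0) lam) {r c c' : ℕ} (hcc : c ≤ c')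
    (h1 : (r, c) ∈ cells k w (fun _ => 0) lam) (h2 : (r, c') ∈ cells k w (fun _ => 0) lam) :
    T (r, c) ≤ T (r, c') := hT.2.2.1 r c c' hcc h1 h2

lemma tcol (hT : T ∈ SkewSSYT k k w (fun _ => 0) lam) {r r' c : ℕ} (hrr : r < r')
    (h1 : (r, c) ∈ cells k w (fun _ => 0) lam) (h2 : (r', c) ∈ cells k w (fun _ => 0) lam) :
    T (r, c) < T (r', c) := hT.2.2.2 r r' c hrr h1 h2

end Tableau

/-! ### Finiteness -/

lemma ssyt_finite (k B C : ℕ) (lo hi : ℕ → ℕ) : (SkewSSYT k B C lo hi).Finite := by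
  classical
  have h : SkewSSYT k B C lo hi ⊆
      (fun g : {p // p ∈ cells B C lo hi} → Fin (k + 1) =>
        (fun p : ℕ × ℕ => if hp : p ∈ cells B C lo hi then (g ⟨p, hp⟩ : ℕ) else 0)) ''
        Set.univ := by
    intro T hT
    refine ⟨fun q => ⟨T q.1, Nat.lt_succ_of_le ((hT.2.1 q.1 q.2).2)⟩, Set.mem_univ _, ?_⟩
    funext p
    by_cases hp : p ∈ cells B C lo hi
    · simp [hp]
    · simp [hp, hT.1 p hp]
  exact Set.Finite.subset (Set.toFinite _) h

/-! ### Convex finsets of naturals -/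

lemma convex_eq_Ico (S : Finset ℕ)
    (hc : ∀ a ∈ S, ∀ b ∈ S, ∀ c, a ≤ c → c ≤ b → c ∈ S) :
    S = Finset.Ico (if h : S.Nonempty then S.min' h else 0)
      ((if h : S.Nonempty then S.min' h else 0) + S.card) := by
  rcases S.eq_empty_or_nonempty with h | h
  · subst h; simp
  · rw [dif_pos h]
    set p := S.min' h with hp
    set M := S.max' h with hM
    have hIcc : S = Finset.Icc p M := by
      ext s
      constructor
      · intro hs; exact Finset.mem_Icc.2 ⟨S.min'_le s hs, S.le_max' s hs⟩
      · intro hs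
        rcases Finset.mem_Icc.1 hs with ⟨h1, h2⟩
        exact hc p (S.min'_mem h) M (S.max'_mem h) s h1 h2
    have hpM : p ≤ M := S.min'_le M (S.max'_mem h)
    rw [hIcc, Nat.card_Icc, ← Finset.Ico_add_one_right_eq_Icc]
    congr 1
    omega

end FacSchurProof
namespace FacSchurProof
open Finset

/-! ### Symmetry of the one-row factorial sum -/

noncomputable def Pprod (y : ℤ → ℝ) (θ : ℤ) (u : ℝ) (m : ℕ) : ℝ :=
  ∏ t ∈ Finset.range m, (u - y (θ + t))

noncomputable def Gsum (y : ℤ → ℝ) (θ : ℤ) (u v : ℝ) (m : ℕ) : ℝ :=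
  ∑ j ∈ Finset.range m, Pprod y θ u j * ∏ t ∈ Finset.Ico (j + 1) m, (v - y (θ + t))

noncomputable def Fsum (y : ℤ → ℝ) (θ : ℤ) (u v : ℝ) (m : ℕ) : ℝ :=
  ∑ j ∈ Finset.range (m + 1),
    Pprod y θ u j * ∏ t ∈ Finset.Ico j m, (v - y (θ + t + 1))

variable (y : ℤ → ℝ) (θ : ℤ) (u v : ℝ) (m : ℕ)

lemma Gsum_succ :
    Gsum y θ u v (m + 1) = Gsum y θ u v m * (v - y (θ + m)) + Pprod y θ u m := by
  unfold Gsum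
  rw [Finset.sum_range_succ, Finset.sum_mul]
  congr 1
  · apply Finset.sum_congr rfl
    intro j hj
    rw [Finset.mem_range] at hj
    rw [Finset.prod_Ico_succ_top (by omega : j + 1 ≤ m)]
    ring
  · simp [Pprod]

lemma Ptel : Pprod y θ u m - Pprod y θ v m = (u - v) * Gsum y θ u v m := by
  induction m with
  | zero => simp [Pprod, Gsum]
  | succ m ih =>
      rw [Gsum_succ]
      unfold Pprod
      rw [Finset.prod_range_succ, Finset.prod_range_succ]
      unfold Pprod at ih
      linear_combination (v - y (θ + (m : ℤ))) * ih

lemma Fsum_eq_Gsum : Fsum y θ u v m = Gsum y θ u v (m + 1) := by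
  unfold Fsum Gsum
  apply Finset.sum_congr rfl
  intro j hj
  congr 1
  rw [Finset.prod_Ico_eq_prod_range, Finset.prod_Ico_eq_prod_range]
  have hm : m - j = m + 1 - (j + 1) := by omega
  rw [← hm]
  apply Finset.prod_congr rfl
  intro t _
  congr 1
  push_cast
  ring

lemma Fsum_symm : Fsum y θ u v m = Fsum y θ v u m := by
  by_cases huv : u = v
  · subst huv; rfl
  · apply mul_left_cancel₀ (sub_ne_zero.2 huv)
    rw [Fsum_eq_Gsum, Fsum_eq_Gsum]
    linear_combination (-1 : ℝ) * Ptel y θ u v (m + 1) - Ptel y θ v u (m + 1)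

end FacSchurProof
namespace FacSchurProof
open Finset

/-! ### Free and locked cells -/

def freeP (i : ℕ) (T : (ℕ × ℕ) → ℕ) (p : ℕ × ℕ) : Prop :=
  (T p = i ∧ T (p.1 + 1, p.2) ≠ i + 1) ∨ (T p = i + 1 ∧ T (p.1 - 1, p.2) ≠ i)

noncomputable def frame (i : ℕ) (T : (ℕ × ℕ) → ℕ) : (ℕ × ℕ) → ℕ :=
  fun p => if freeP i T p then 0 else T p

variable {k w i : ℕ} {lam : ℕ → ℕ} {T : (ℕ × ℕ) → ℕ}

lemma freeP_pair {r c : ℕ} :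
    freeP i T (r, c) ↔
      (T (r, c) = i ∧ T (r + 1, c) ≠ i + 1) ∨ (T (r, c) = i + 1 ∧ T (r - 1, c) ≠ i) :=
  Iff.rfl

lemma free_val {p : ℕ × ℕ} (h : freeP i T p) : T p = i ∨ T p = i + 1 := by
  rcases h with ⟨h, _⟩ | ⟨h, _⟩ <;> [left; right] <;> exact h

lemma free_mem (hi1 : 1 ≤ i) (hT : T ∈ SkewSSYT k k w (fun _ => 0) lam) {p : ℕ × ℕ}
    (h : freeP i T p) : p ∈ cells k w (fun _ => 0) lam := by
  refine tmem hT ?_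
  rcases free_val h with h' | h' <;> omega

lemma free_below (hlam : InBox k w lam) (hi1 : 1 ≤ i)
    (hT : T ∈ SkewSSYT k k w (fun _ => 0) lam) {r c : ℕ}
    (h : freeP i T (r, c)) (h2 : (r + 1, c) ∈ cells k w (fun _ => 0) lam) :
    i + 1 < T (r + 1, c) := by
  have hm : (r, c) ∈ cells k w (fun _ => 0) lam := free_mem hi1 hT h
  have hcol : T (r, c) < T (r + 1, c) := tcol hT (Nat.lt_succ_self r) hm h2
  rw [freeP_pair] at h
  rcases h with ⟨h1, hne⟩ | ⟨h1, _⟩ <;> omega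

lemma free_above (hi1 : 1 ≤ i) (hT : T ∈ SkewSSYT k k w (fun _ => 0) lam) {r c : ℕ}
    (h : freeP i T (r + 1, c)) (h2 : (r, c) ∈ cells k w (fun _ => 0) lam) :
    T (r, c) < i := by
  have hm : (r + 1, c) ∈ cells k w (fun _ => 0) lam := free_mem hi1 hT h
  have hcol : T (r, c) < T (r + 1, c) := tcol hT (Nat.lt_succ_self r) h2 hm
  rw [freeP_pair] at h
  rcases h with ⟨h1, _⟩ | ⟨h1, hne⟩
  · omega
  · simp only [Nat.add_sub_cancel] at hne
    omega

lemma free_not_vert (hlam : InBox k w lam) (hi1 : 1 ≤ i)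
    (hT : T ∈ SkewSSYT k k w (fun _ => 0) lam) {r c : ℕ}
    (h : freeP i T (r, c)) : ¬ freeP i T (r + 1, c) := by
  intro h'
  have h2 := free_mem hi1 hT h'
  have := free_below hlam hi1 hT h h2
  rcases free_val h' with hv | hv <;> omega

lemma locked_i (hT : T ∈ SkewSSYT k k w (fun _ => 0) lam) {r c : ℕ}
    (hv : T (r, c) = i) (hnf : ¬ freeP i T (r, c)) : T (r + 1, c) = i + 1 := by
  unfold freeP at hnf
  push_neg at hnf
  exact hnf.1 hv

lemma locked_i1 (hi1 : 1 ≤ i) (hT : T ∈ SkewSSYT k k w (fun _ => 0) lam) {r c : ℕ}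
    (hv : T (r, c) = i + 1) (hnf : ¬ freeP i T (r, c)) : 1 ≤ r ∧ T (r - 1, c) = i := by
  unfold freeP at hnf
  push_neg at hnf
  have h2 := hnf.2 hv
  rcases Nat.eq_zero_or_pos r with hr | hr
  · subst hr
    simp only [Nat.zero_sub] at h2
    omega
  · exact ⟨hr, h2⟩

lemma contig (hlam : InBox k w lam) (hi1 : 1 ≤ i)
    (hT : T ∈ SkewSSYT k k w (fun _ => 0) lam) {r c1 c2 c3 : ℕ}
    (h1 : freeP i T (r, c1)) (h3 : freeP i T (r, c3)) (h12 : c1 ≤ c2) (h23 : c2 ≤ c3) :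
    freeP i T (r, c2) := by
  have m1 := free_mem hi1 hT h1
  have m3 := free_mem hi1 hT h3
  have m2 : (r, c2) ∈ cells k w (fun _ => 0) lam := cells_mono hlam m3 le_rfl h23
  have v2a : T (r, c1) ≤ T (r, c2) := trow hT h12 m1 m2
  have v2b : T (r, c2) ≤ T (r, c3) := trow hT h23 m2 m3
  have hv1 := free_val h1
  have hv3 := free_val h3
  rw [freeP_pair] at h1 h3 ⊢
  have hv2 : T (r, c2) = i ∨ T (r, c2) = i + 1 := by omega
  rcases hv2 with hv2 | hv2
  · left
    refine ⟨hv2, ?_⟩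
    intro hb
    have hv1' : T (r, c1) = i := by omega
    have hne : T (r + 1, c1) ≠ i + 1 := by
      rcases h1 with ⟨_, hne⟩ | ⟨hv, _⟩
      · exact hne
      · omega
    have hm2' : (r + 1, c2) ∈ cells k w (fun _ => 0) lam := tmem hT (by omega)
    have hm1' : (r + 1, c1) ∈ cells k w (fun _ => 0) lam := cells_mono hlam hm2' le_rfl h12
    have l1 : T (r + 1, c1) ≤ T (r + 1, c2) := trow hT h12 hm1' hm2'
    have l2 : T (r, c1) < T (r + 1, c1) := tcol hT (Nat.lt_succ_self r) m1 hm1'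
    omega
  · right
    refine ⟨hv2, ?_⟩
    intro hb
    rcases Nat.eq_zero_or_pos r with hr | hr
    · subst hr
      simp only [Nat.zero_sub] at hb
      omega
    · have hm2' : (r - 1, c2) ∈ cells k w (fun _ => 0) lam :=
        cells_mono hlam m2 (Nat.sub_le r 1) le_rfl
      have hv3' : T (r, c3) = i + 1 := by omega
      have hne3 : T (r - 1, c3) ≠ i := by
        rcases h3 with ⟨hv, _⟩ | ⟨_, hne⟩
        · omega
        · exact hne
      have hm3' : (r - 1, c3) ∈ cells k w (fun _ => 0) lam :=
        cells_mono hlam m3 (Nat.sub_le r 1) le_rfl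
      have l1 : T (r - 1, c2) ≤ T (r - 1, c3) := trow hT h23 hm2' hm3'
      have l2 : T (r - 1, c3) < T (r, c3) := tcol hT (by omega) hm3' m3
      omega

end FacSchurProof
namespace FacSchurProof
open Finset

/-! ### Column sets of free cells; the parametrized tableau -/

noncomputable def colset (i w : ℕ) (T0 : (ℕ × ℕ) → ℕ) (r : ℕ) : Finset ℕ :=
  (Finset.range w).filter fun c => freeP i T0 (r, c)

noncomputable def blo (i w : ℕ) (T0 : (ℕ × ℕ) → ℕ) (r : ℕ) : ℕ :=
  if h : (colset i w T0 r).Nonempty then (colset i w T0 r).min' h else 0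

noncomputable def bm (i w : ℕ) (T0 : (ℕ × ℕ) → ℕ) (r : ℕ) : ℕ :=
  (colset i w T0 r).card

noncomputable def tab (i w : ℕ) (T0 : (ℕ × ℕ) → ℕ) (a : ℕ → ℕ) : (ℕ × ℕ) → ℕ :=
  fun p => if freeP i T0 p then (if p.2 < blo i w T0 p.1 + a p.1 then i else i + 1) else T0 p

variable {k w i : ℕ} {lam : ℕ → ℕ} {T0 : (ℕ × ℕ) → ℕ}

lemma mem_colset (hlam : InBox k w lam) (hi1 : 1 ≤ i)
    (hT0 : T0 ∈ SkewSSYT k k w (fun _ => 0) lam) {r c : ℕ} :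
    c ∈ colset i w T0 r ↔ freeP i T0 (r, c) := by
  unfold colset
  rw [Finset.mem_filter, Finset.mem_range]
  constructor
  · exact fun h => h.2
  · intro h
    have := (mem_cells hlam).1 (free_mem hi1 hT0 h)
    exact ⟨lt_of_lt_of_le this.2 (hlam.2.1 r), h⟩

lemma colset_eq (hlam : InBox k w lam) (hi1 : 1 ≤ i)
    (hT0 : T0 ∈ SkewSSYT k k w (fun _ => 0) lam) (r : ℕ) :
    colset i w T0 r = Finset.Ico (blo i w T0 r) (blo i w T0 r + bm i w T0 r) := by
  have h := convex_eq_Ico (colset i w T0 r) ?_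
  · exact h
  · intro a ha b hb c hac hcb
    rw [mem_colset hlam hi1 hT0] at ha hb ⊢
    exact contig hlam hi1 hT0 ha hb hac hcb

lemma free_row_lt (hlam : InBox k w lam) (hi1 : 1 ≤ i)
    (hT0 : T0 ∈ SkewSSYT k k w (fun _ => 0) lam) {r c : ℕ}
    (h : freeP i T0 (r, c)) : r < k :=
  ((mem_cells hlam).1 (free_mem hi1 hT0 h)).1

lemma tab_pair (a : ℕ → ℕ) (r c : ℕ) :
    tab i w T0 a (r, c)
      = if freeP i T0 (r, c) then (if c < blo i w T0 r + a r then i else i + 1)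
        else T0 (r, c) := rfl

lemma tab_eq_of_agree (hlam : InBox k w lam) (hi1 : 1 ≤ i)
    (hT0 : T0 ∈ SkewSSYT k k w (fun _ => 0) lam) {a a' : ℕ → ℕ}
    (h : ∀ r, r < k → a r = a' r) : tab i w T0 a = tab i w T0 a' := by
  funext p
  unfold tab
  by_cases hf : freeP i T0 p
  · rw [if_pos hf, if_pos hf, h p.1 ?_]
    obtain ⟨r, c⟩ := p
    exact free_row_lt hlam hi1 hT0 hf
  · rw [if_neg hf, if_neg hf]

/-- Adjacency conditions suffice for semistandardness. -/
lemma ssyt_of_adj (hlam : InBox k w lam) (T : (ℕ × ℕ) → ℕ)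
    (hz : ∀ p, p ∉ cells k w (fun _ => 0) lam → T p = 0)
    (hrange : ∀ p ∈ cells k w (fun _ => 0) lam, 1 ≤ T p ∧ T p ≤ k)
    (hrow : ∀ r c, (r, c) ∈ cells k w (fun _ => 0) lam →
      (r, c + 1) ∈ cells k w (fun _ => 0) lam → T (r, c) ≤ T (r, c + 1))
    (hcol : ∀ r c, (r, c) ∈ cells k w (fun _ => 0) lam →
      (r + 1, c) ∈ cells k w (fun _ => 0) lam → T (r, c) < T (r + 1, c)) :
    T ∈ SkewSSYT k k w (fun _ => 0) lam := by
  refine ⟨hz, hrange, ?_, ?_⟩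
  · intro r c c' hcc h1 h2
    revert h2
    induction c', hcc using Nat.le_induction with
    | base => intro _; exact le_rfl
    | succ n hn ih =>
        intro h2
        have h2' : (r, n) ∈ cells k w (fun _ => 0) lam :=
          cells_mono hlam h2 le_rfl (by omega : n ≤ n + 1)
        exact le_trans (ih h2') (hrow r n h2' h2)
  · intro r r' c hrr h1 h2
    revert h2
    induction r', hrr using Nat.le_induction with
    | base => intro h2; exact hcol r c h1 h2
    | succ n hn ih =>
        intro h2
        have h2' : (n, c) ∈ cells k w (fun _ => 0) lam :=
          cells_mono hlam h2 (by omega : n ≤ n + 1) le_rfl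
        exact lt_trans (ih h2') (hcol n c h2' h2)

lemma tab_mem (hlam : InBox k w lam) (hi1 : 1 ≤ i) (hik : i + 1 ≤ k)
    (hT0 : T0 ∈ SkewSSYT k k w (fun _ => 0) lam) (a : ℕ → ℕ) :
    tab i w T0 a ∈ SkewSSYT k k w (fun _ => 0) lam := by
  refine ssyt_of_adj hlam _ ?_ ?_ ?_ ?_
  · -- zero outside
    intro p hp
    have hf : ¬ freeP i T0 p := fun hf => hp (free_mem hi1 hT0 hf)
    unfold tab
    rw [if_neg hf]
    exact hT0.1 p hp
  · -- range
    intro p hp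
    unfold tab
    by_cases hf : freeP i T0 p
    · rw [if_pos hf]
      split_ifs <;> omega
    · rw [if_neg hf]
      exact hT0.2.1 p hp
  · -- rows
    intro r c h1 h2
    rw [tab_pair, tab_pair]
    by_cases hf1 : freeP i T0 (r, c) <;> by_cases hf2 : freeP i T0 (r, c + 1)
    · rw [if_pos hf1, if_pos hf2]
      split_ifs <;> omega
    · -- free, nonfree
      rw [if_pos hf1, if_neg hf2]
      have hge : i ≤ T0 (r, c) := by rcases free_val hf1 with h | h <;> omega
      have hmono : T0 (r, c) ≤ T0 (r, c + 1) := trow hT0 (by omega : c ≤ c + 1) h1 h2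
      have hne : T0 (r, c + 1) ≠ i := by
        intro hv
        have hb : T0 (r + 1, c + 1) = i + 1 := locked_i hT0 hv hf2
        have hm1 : (r + 1, c + 1) ∈ cells k w (fun _ => 0) lam := tmem hT0 (by omega)
        have hm2 : (r + 1, c) ∈ cells k w (fun _ => 0) lam :=
          cells_mono hlam hm1 le_rfl (by omega : c ≤ c + 1)
        have hbelow := free_below hlam hi1 hT0 hf1 hm2
        have := trow hT0 (by omega : c ≤ c + 1) hm2 hm1
        omega
      split_ifs <;> omega
    · -- nonfree, free
      rw [if_neg hf1, if_pos hf2]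
      have hv2 := free_val hf2
      have hmono : T0 (r, c) ≤ T0 (r, c + 1) := trow hT0 (by omega : c ≤ c + 1) h1 h2
      have hne : T0 (r, c) ≠ i + 1 := by
        intro hv
        obtain ⟨hr, hab⟩ := locked_i1 hi1 hT0 hv hf1
        have hm1 : (r - 1, c) ∈ cells k w (fun _ => 0) lam :=
          cells_mono hlam h1 (Nat.sub_le r 1) le_rfl
        have hm2 : (r - 1, c + 1) ∈ cells k w (fun _ => 0) lam :=
          cells_mono hlam h2 (Nat.sub_le r 1) le_rfl
        have hr1 : T0 (r - 1, c) ≤ T0 (r - 1, c + 1) := trow hT0 (by omega : c ≤ c + 1) hm1 hm2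
        have hr2 : T0 (r - 1, c + 1) < T0 (r, c + 1) := tcol hT0 (by omega) hm2 h2
        have hvc1 : T0 (r, c + 1) = i + 1 := by omega
        have : T0 (r - 1, c + 1) = i := by omega
        rw [freeP_pair] at hf2
        rcases hf2 with ⟨hv', _⟩ | ⟨_, hne'⟩ <;> omega
      split_ifs <;> omega
    · rw [if_neg hf1, if_neg hf2]
      exact trow hT0 (by omega : c ≤ c + 1) h1 h2
  · -- columns
    intro r c h1 h2
    rw [tab_pair, tab_pair]
    by_cases hf1 : freeP i T0 (r, c) <;> by_cases hf2 : freeP i T0 (r + 1, c)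
    · exact absurd hf2 (free_not_vert hlam hi1 hT0 hf1)
    · rw [if_pos hf1, if_neg hf2]
      have := free_below hlam hi1 hT0 hf1 h2
      split_ifs <;> omega
    · rw [if_neg hf1, if_pos hf2]
      have := free_above hi1 hT0 hf2 h1
      split_ifs <;> omega
    · rw [if_neg hf1, if_neg hf2]
      exact tcol hT0 (Nat.lt_succ_self r) h1 h2

end FacSchurProof
namespace FacSchurProof
open Finset

variable {k w i : ℕ} {lam : ℕ → ℕ} {T0 T : (ℕ × ℕ) → ℕ}

lemma frame_tab (hlam : InBox k w lam) (hi1 : 1 ≤ i) (hik : i + 1 ≤ k)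
    (hT0 : T0 ∈ SkewSSYT k k w (fun _ => 0) lam) (a : ℕ → ℕ) :
    frame i (tab i w T0 a) = frame i T0 := by
  have htm := tab_mem hlam hi1 hik hT0 a
  have hiff : ∀ p, freeP i (tab i w T0 a) p ↔ freeP i T0 p := by
    rintro ⟨r, c⟩
    constructor
    · -- tab-free implies T0-free
      intro hft
      by_contra hnf
      have htv : tab i w T0 a (r, c) = T0 (r, c) := by rw [tab_pair, if_neg hnf]
      rw [freeP_pair] at hft
      have hv : T0 (r, c) = i ∨ T0 (r, c) = i + 1 := by
        rcases hft with ⟨h, _⟩ | ⟨h, _⟩ <;> omega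
      rcases hv with hvi | hvi
      · have hb : T0 (r + 1, c) = i + 1 := locked_i hT0 hvi hnf
        have hnf' : ¬ freeP i T0 (r + 1, c) := by
          rw [freeP_pair]
          rintro (⟨hv', _⟩ | ⟨_, hne⟩)
          · omega
          · simp only [Nat.add_sub_cancel] at hne; omega
        have htv' : tab i w T0 a (r + 1, c) = i + 1 := by
          rw [tab_pair, if_neg hnf']; exact hb
        rcases hft with ⟨_, hne⟩ | ⟨hv', _⟩ <;> omega
      · obtain ⟨hr, hb⟩ := locked_i1 hi1 hT0 hvi hnf
        have hnf' : ¬ freeP i T0 (r - 1, c) := by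
          rw [freeP_pair]
          rintro (⟨_, hne⟩ | ⟨hv', _⟩)
          · have hre : r - 1 + 1 = r := by omega
            rw [hre] at hne; omega
          · omega
        have htv' : tab i w T0 a (r - 1, c) = i := by
          rw [tab_pair, if_neg hnf']; exact hb
        rcases hft with ⟨hv', _⟩ | ⟨_, hne⟩ <;> omega
    · -- T0-free implies tab-free
      intro hf
      have hm := free_mem hi1 hT0 hf
      rw [freeP_pair]
      by_cases hvc : c < blo i w T0 r + a r
      · left
        have h1 : tab i w T0 a (r, c) = i := by rw [tab_pair, if_pos hf, if_pos hvc]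
        refine ⟨h1, ?_⟩
        by_cases hm' : (r + 1, c) ∈ cells k w (fun _ => 0) lam
        · have hnf' : ¬ freeP i T0 (r + 1, c) := free_not_vert hlam hi1 hT0 hf
          have : tab i w T0 a (r + 1, c) = T0 (r + 1, c) := by rw [tab_pair, if_neg hnf']
          have hbel := free_below hlam hi1 hT0 hf hm'
          omega
        · have : tab i w T0 a (r + 1, c) = 0 := htm.1 _ hm'
          omega
      · right
        have h1 : tab i w T0 a (r, c) = i + 1 := by rw [tab_pair, if_pos hf, if_neg hvc]
        refine ⟨h1, ?_⟩
        rcases Nat.eq_zero_or_pos r with hr | hr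
        · subst hr
          simp only [Nat.zero_sub]
          omega
        · have hre : r - 1 + 1 = r := by omega
          have hm'' : (r - 1, c) ∈ cells k w (fun _ => 0) lam :=
            cells_mono hlam hm (Nat.sub_le r 1) le_rfl
          have hnf' : ¬ freeP i T0 (r - 1, c) := by
            intro hff
            have := free_not_vert hlam hi1 hT0 hff
            rw [hre] at this
            exact this hf
          have heq : tab i w T0 a (r - 1, c) = T0 (r - 1, c) := by
            rw [tab_pair, if_neg hnf']
          have hf' : freeP i T0 (r - 1 + 1, c) := by rw [hre]; exact hf
          have := free_above hi1 hT0 hf' hm''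
          omega
  funext p
  unfold frame
  by_cases hf : freeP i T0 p
  · rw [if_pos ((hiff p).2 hf), if_pos hf]
  · rw [if_neg (fun h => hf ((hiff p).1 h)), if_neg hf]
    rw [show tab i w T0 a p = if freeP i T0 p then _ else T0 p from rfl, if_neg hf]

/-! ### Fibers of the frame map -/

lemma fiber_free_imp (hi1 : 1 ≤ i)
    (hT : T ∈ SkewSSYT k k w (fun _ => 0) lam)
    (hT0 : T0 ∈ SkewSSYT k k w (fun _ => 0) lam)
    (hfr : frame i T = frame i T0) {p : ℕ × ℕ} (hf : freeP i T p) : freeP i T0 p := by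
  have h0 : frame i T p = 0 := by unfold frame; rw [if_pos hf]
  rw [hfr] at h0
  by_contra hnf
  unfold frame at h0
  rw [if_neg hnf] at h0
  have hm := free_mem hi1 hT hf
  have := (hT0.2.1 p hm).1
  omega

lemma fiber_free_iff (hi1 : 1 ≤ i)
    (hT : T ∈ SkewSSYT k k w (fun _ => 0) lam)
    (hT0 : T0 ∈ SkewSSYT k k w (fun _ => 0) lam)
    (hfr : frame i T = frame i T0) (p : ℕ × ℕ) : freeP i T p ↔ freeP i T0 p :=
  ⟨fiber_free_imp hi1 hT hT0 hfr, fiber_free_imp hi1 hT0 hT hfr.symm⟩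

lemma fiber_eq_off (hi1 : 1 ≤ i)
    (hT : T ∈ SkewSSYT k k w (fun _ => 0) lam)
    (hT0 : T0 ∈ SkewSSYT k k w (fun _ => 0) lam)
    (hfr : frame i T = frame i T0) {p : ℕ × ℕ} (hnf : ¬ freeP i T0 p) : T p = T0 p := by
  have hnf' : ¬ freeP i T p := fun h => hnf (fiber_free_imp hi1 hT hT0 hfr h)
  have := congrFun hfr p
  unfold frame at this
  rwa [if_neg hnf', if_neg hnf] at this

/-- The number of `i`-entries in the free block of row `r`. -/
noncomputable def acount (i w : ℕ) (T0 T : (ℕ × ℕ) → ℕ) (r : ℕ) : ℕ :=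
  ((colset i w T0 r).filter fun c => T (r, c) = i).card

lemma acount_le (r : ℕ) : acount i w T0 T r ≤ bm i w T0 r :=
  Finset.card_le_card (Finset.filter_subset _ _)

/-- Every member of the fiber is `tab` of its row counts. -/
lemma fiber_repr (hlam : InBox k w lam) (hi1 : 1 ≤ i)
    (hT : T ∈ SkewSSYT k k w (fun _ => 0) lam)
    (hT0 : T0 ∈ SkewSSYT k k w (fun _ => 0) lam)
    (hfr : frame i T = frame i T0) :
    T = tab i w T0 (acount i w T0 T) := by
  funext p
  obtain ⟨r, c⟩ := p
  rw [tab_pair]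
  by_cases hf : freeP i T0 (r, c)
  · rw [if_pos hf]
    set S := (colset i w T0 r).filter (fun c => T (r, c) = i) with hS
    -- S is a convex set with the same min as colset (when nonempty)
    have hcs := colset_eq hlam hi1 hT0 r
    have hfree : ∀ c', c' ∈ colset i w T0 r → freeP i T (r, c') := fun c' hc' =>
      (fiber_free_iff hi1 hT hT0 hfr _).2 ((mem_colset hlam hi1 hT0).1 hc')
    have hmemS : ∀ c', c' ∈ S → c' ∈ colset i w T0 r := fun c' hc' =>
      (Finset.mem_filter.1 hc').1
    have hdown : ∀ a ∈ S, ∀ b, b ∈ colset i w T0 r → b ≤ a → b ∈ S := by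
      intro a ha b hb hba
      rcases Finset.mem_filter.1 ha with ⟨ha1, ha2⟩
      refine Finset.mem_filter.2 ⟨hb, ?_⟩
      have h1 : T (r, b) ≤ T (r, a) :=
        trow hT hba (free_mem hi1 hT (hfree b hb)) (free_mem hi1 hT (hfree a ha1))
      have h2 := free_val (hfree b hb)
      omega
    have hconv : ∀ a ∈ S, ∀ b ∈ S, ∀ c', a ≤ c' → c' ≤ b → c' ∈ S := by
      intro a ha b hb c' hac hcb
      have hc' : c' ∈ colset i w T0 r := by
        rw [mem_colset hlam hi1 hT0]
        exact contig hlam hi1 hT0 ((mem_colset hlam hi1 hT0).1 (hmemS a ha))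
          ((mem_colset hlam hi1 hT0).1 (hmemS b hb)) hac hcb
      exact hdown b hb c' hc' hcb
    have hSeq := convex_eq_Ico S hconv
    have hminS : (if h : S.Nonempty then S.min' h else 0) = blo i w T0 r ∨ S = ∅ := by
      rcases S.eq_empty_or_nonempty with he | hne
      · right; exact he
      · left
        rw [dif_pos hne]
        have hcne : (colset i w T0 r).Nonempty := ⟨_, hmemS _ (S.min'_mem hne)⟩
        have hblo : blo i w T0 r = (colset i w T0 r).min' hcne := by
          unfold blo; rw [dif_pos hcne]
        have h1 : blo i w T0 r ∈ S := by
          refine hdown _ (S.min'_mem hne) _ ?_ ?_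
          · rw [hblo]; exact (colset i w T0 r).min'_mem hcne
          · rw [hblo]
            exact Finset.min'_le _ _ (hmemS _ (S.min'_mem hne))
        exact le_antisymm (S.min'_le _ h1)
          (by rw [hblo]; exact Finset.min'_le _ _ (hmemS _ (S.min'_mem hne)))
    -- membership in colset of c
    have hcc : c ∈ colset i w T0 r := (mem_colset hlam hi1 hT0).2 hf
    have hvT := free_val (hfree c hcc)
    have hcIco : blo i w T0 r ≤ c ∧ c < blo i w T0 r + bm i w T0 r := by
      rw [hcs] at hcc; exact Finset.mem_Ico.1 hcc
    have hiff : T (r, c) = i ↔ c ∈ S := by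
      constructor
      · intro h; exact Finset.mem_filter.2 ⟨hcc, h⟩
      · intro h; exact (Finset.mem_filter.1 h).2
    rcases hminS with hmin | hemp
    · rw [hmin] at hSeq
      have hcard : S.card = acount i w T0 T r := rfl
      rw [hcard] at hSeq
      by_cases hvi : T (r, c) = i
      · have := hiff.1 hvi
        rw [hSeq, Finset.mem_Ico] at this
        rw [if_pos this.2]
        exact hvi
      · have hni : c ∉ S := fun h => hvi (hiff.2 h)
        rw [hSeq, Finset.mem_Ico] at hni
        push_neg at hni
        rw [if_neg (by omega : ¬ c < blo i w T0 r + acount i w T0 T r)]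
        omega
    · have hac : acount i w T0 T r = 0 := by
        unfold acount; rw [← hS, hemp]; rfl
      have hni : c ∉ S := by rw [hemp]; exact Finset.notMem_empty c
      have hvi : T (r, c) ≠ i := fun h => hni (hiff.1 h)
      rw [hac, if_neg (by omega : ¬ c < blo i w T0 r + 0)]
      omega
  · rw [if_neg hf]
    exact fiber_eq_off hi1 hT hT0 hfr hf

end FacSchurProof
namespace FacSchurProof
open Finset

variable {k w i : ℕ} {lam : ℕ → ℕ} {T0 T : (ℕ × ℕ) → ℕ}

lemma acount_tab (hlam : InBox k w lam) (hi1 : 1 ≤ i)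
    (hT0 : T0 ∈ SkewSSYT k k w (fun _ => 0) lam) {a : ℕ → ℕ}
    (ha : ∀ r, a r ≤ bm i w T0 r) (r : ℕ) :
    acount i w T0 (tab i w T0 a) r = a r := by
  unfold acount
  have hset : ((colset i w T0 r).filter fun c => tab i w T0 a (r, c) = i)
      = Finset.Ico (blo i w T0 r) (blo i w T0 r + a r) := by
    ext c
    rw [Finset.mem_filter, Finset.mem_Ico]
    constructor
    · rintro ⟨hc, hval⟩
      have hf : freeP i T0 (r, c) := (mem_colset hlam hi1 hT0).1 hc
      rw [tab_pair, if_pos hf] at hval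
      have h1 : blo i w T0 r ≤ c := by
        have := hc
        rw [colset_eq hlam hi1 hT0 r, Finset.mem_Ico] at this
        exact this.1
      constructor
      · exact h1
      · by_contra hcon
        rw [if_neg (by omega : ¬ c < blo i w T0 r + a r)] at hval
        omega
    · rintro ⟨h1, h2⟩
      have hc : c ∈ colset i w T0 r := by
        rw [colset_eq hlam hi1 hT0 r, Finset.mem_Ico]
        exact ⟨h1, by have := ha r; omega⟩
      have hf : freeP i T0 (r, c) := (mem_colset hlam hi1 hT0).1 hc
      refine ⟨hc, ?_⟩
      rw [tab_pair, if_pos hf, if_pos (by omega : c < blo i w T0 r + a r)]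
  rw [hset, Nat.card_Ico]
  omega

/-! ### Weight factorization -/

/-- The content parameter of row `r`. -/
noncomputable def thet (i w : ℕ) (T0 : (ℕ × ℕ) → ℕ) (r : ℕ) : ℤ :=
  (i : ℤ) + (blo i w T0 r : ℤ) - (r : ℤ)

lemma prod_cells_split (hlam : InBox k w lam) (hi1 : 1 ≤ i)
    (hT0 : T0 ∈ SkewSSYT k k w (fun _ => 0) lam) (f : ℕ × ℕ → ℝ) :
    ∏ p ∈ cells k w (fun _ => 0) lam, f p =
      (∏ p ∈ (cells k w (fun _ => 0) lam).filter (fun p => ¬ freeP i T0 p), f p) *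
        ∏ r ∈ Finset.range k, ∏ c ∈ colset i w T0 r, f (r, c) := by
  rw [← Finset.prod_filter_mul_prod_filter_not (cells k w (fun _ => 0) lam)
    (fun p => ¬ freeP i T0 p) f]
  congr 1
  have h1 : (cells k w (fun _ => 0) lam).filter (fun p => ¬ ¬ freeP i T0 p)
      = (Finset.range k ×ˢ Finset.range w).filter (fun p => freeP i T0 p) := by
    ext p
    rw [Finset.mem_filter, Finset.mem_filter, not_not]
    constructor
    · rintro ⟨hp, hf⟩
      exact ⟨Finset.mem_filter.1 hp |>.1, hf⟩
    · rintro ⟨_, hf⟩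
      exact ⟨free_mem hi1 hT0 hf, hf⟩
  rw [h1, Finset.prod_filter, Finset.prod_product]
  apply Finset.prod_congr rfl
  intro r _
  rw [← Finset.prod_filter]
  rfl

lemma row_prod_tab (hlam : InBox k w lam) (hi1 : 1 ≤ i)
    (hT0 : T0 ∈ SkewSSYT k k w (fun _ => 0) lam) (g : ℕ → ℝ) (y : ℤ → ℝ) {a : ℕ → ℕ}
    (ha : ∀ r, a r ≤ bm i w T0 r) (r : ℕ) :
    (∏ c ∈ colset i w T0 r,
      (g (tab i w T0 a (r, c)) -
        y ((tab i w T0 a (r, c) : ℤ) + (c : ℤ) - (r : ℤ)))) =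
      Pprod y (thet i w T0 r) (g i) (a r) *
        ∏ t ∈ Finset.Ico (a r) (bm i w T0 r),
          (g (i + 1) - y (thet i w T0 r + t + 1)) := by
  have hfree : ∀ t, t < bm i w T0 r → freeP i T0 (r, blo i w T0 r + t) := by
    intro t ht
    have : blo i w T0 r + t ∈ colset i w T0 r := by
      rw [colset_eq hlam hi1 hT0 r, Finset.mem_Ico]
      omega
    exact (mem_colset hlam hi1 hT0).1 this
  rw [colset_eq hlam hi1 hT0 r, Finset.prod_Ico_eq_prod_range]
  rw [Nat.add_sub_cancel_left]
  rw [Finset.range_eq_Ico,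
    ← Finset.prod_Ico_consecutive _ (Nat.zero_le (a r)) (ha r), ← Finset.range_eq_Ico]
  congr 1
  · unfold Pprod
    apply Finset.prod_congr rfl
    intro t ht
    rw [Finset.mem_range] at ht
    have hf := hfree t (by have := ha r; omega)
    rw [tab_pair, if_pos hf, if_pos (by omega : blo i w T0 r + t < blo i w T0 r + a r)]
    congr 1
    unfold thet
    push_cast
    ring
  · apply Finset.prod_congr rfl
    intro t ht
    rw [Finset.mem_Ico] at ht
    have hf := hfree t ht.2
    rw [tab_pair, if_pos hf, if_neg (by omega : ¬ blo i w T0 r + t < blo i w T0 r + a r)]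
    congr 1
    unfold thet
    push_cast
    ring

/-! ### The fiber sum factorizes -/

lemma fiber_sum_factor (hlam : InBox k w lam) (hi1 : 1 ≤ i) (hik : i + 1 ≤ k)
    (hT0 : T0 ∈ SkewSSYT k k w (fun _ => 0) lam) (g : ℕ → ℝ) (y : ℤ → ℝ) :
    ∑ T ∈ ((ssyt_finite k k w (fun _ => 0) lam).toFinset.filter
        (fun T => frame i T = frame i T0)),
      ∏ p ∈ cells k w (fun _ => 0) lam,
        (g (T p) - y ((T p : ℤ) + (p.2 : ℤ) - (p.1 : ℤ))) =
      (∏ p ∈ (cells k w (fun _ => 0) lam).filter (fun p => ¬ freeP i T0 p),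
        (g (T0 p) - y ((T0 p : ℤ) + (p.2 : ℤ) - (p.1 : ℤ)))) *
        ∏ r ∈ Finset.range k,
          Fsum y (thet i w T0 r) (g i) (g (i + 1)) (bm i w T0 r) := by
  classical
  set A := (Finset.range k).pi (fun r => Finset.range (bm i w T0 r + 1)) with hA
  set ext : ((r : ℕ) → r ∈ Finset.range k → ℕ) → ℕ → ℕ :=
    fun q r => if h : r ∈ Finset.range k then q r h else 0 with hextdef
  have hext : ∀ q ∈ A, ∀ r, ext q r ≤ bm i w T0 r := by
    intro q hq r
    by_cases h : r ∈ Finset.range k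
    · show (if h : r ∈ Finset.range k then q r h else 0) ≤ bm i w T0 r
      rw [dif_pos h]
      have := (Finset.mem_pi.1 hq) r h
      rw [Finset.mem_range] at this
      omega
    · show (if h : r ∈ Finset.range k then q r h else 0) ≤ bm i w T0 r
      rw [dif_neg h]
      omega
  have hback : ∀ T ∈ ((ssyt_finite k k w (fun _ => 0) lam).toFinset.filter
      (fun T => frame i T = frame i T0)), tab i w T0 (ext (fun r _ => acount i w T0 T r)) = T := by
    intro T hTf
    have hT : T ∈ SkewSSYT k k w (fun _ => 0) lam :=
      (Set.Finite.mem_toFinset _).1 (Finset.mem_filter.1 hTf).1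
    have hfr : frame i T = frame i T0 := (Finset.mem_filter.1 hTf).2
    have hag : ∀ r, r < k → ext (fun r _ => acount i w T0 T r) r = acount i w T0 T r := by
      intro r hr
      show (if h : r ∈ Finset.range k then acount i w T0 T r else 0) = _
      rw [dif_pos (Finset.mem_range.2 hr)]
    rw [tab_eq_of_agree hlam hi1 hT0 hag]
    exact (fiber_repr hlam hi1 hT hT0 hfr).symm
  have step1 : ∑ T ∈ ((ssyt_finite k k w (fun _ => 0) lam).toFinset.filter
        (fun T => frame i T = frame i T0)),
      ∏ p ∈ cells k w (fun _ => 0) lam,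
        (g (T p) - y ((T p : ℤ) + (p.2 : ℤ) - (p.1 : ℤ))) =
      ∑ q ∈ A, ∏ p ∈ cells k w (fun _ => 0) lam,
        (g (tab i w T0 (ext q) p) -
          y ((tab i w T0 (ext q) p : ℤ) + (p.2 : ℤ) - (p.1 : ℤ))) := by
    refine Finset.sum_nbij' (fun T => fun r _ => acount i w T0 T r)
      (fun q => tab i w T0 (ext q)) ?_ ?_ ?_ ?_ ?_
    · intro T hTf
      rw [hA, Finset.mem_pi]
      intro r hr
      rw [Finset.mem_range]
      exact Nat.lt_succ_of_le (acount_le r)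
    · intro q hq
      rw [Finset.mem_filter]
      exact ⟨(Set.Finite.mem_toFinset _).2 (tab_mem hlam hi1 hik hT0 _),
        frame_tab hlam hi1 hik hT0 _⟩
    · intro T hTf
      exact hback T hTf
    · intro q hq
      funext r h
      show acount i w T0 (tab i w T0 (ext q)) r = q r h
      rw [acount_tab hlam hi1 hT0 (hext q hq) r]
      show (if h : r ∈ Finset.range k then q r h else 0) = q r h
      rw [dif_pos h]
    · intro T hTf
      rw [hback T hTf]
  rw [step1]
  have step2 : ∀ q ∈ A, ∏ p ∈ cells k w (fun _ => 0) lam,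
      (g (tab i w T0 (ext q) p) -
        y ((tab i w T0 (ext q) p : ℤ) + (p.2 : ℤ) - (p.1 : ℤ))) =
      (∏ p ∈ (cells k w (fun _ => 0) lam).filter (fun p => ¬ freeP i T0 p),
        (g (T0 p) - y ((T0 p : ℤ) + (p.2 : ℤ) - (p.1 : ℤ)))) *
      ∏ r ∈ Finset.range k,
        (Pprod y (thet i w T0 r) (g i) (ext q r) *
          ∏ t ∈ Finset.Ico (ext q r) (bm i w T0 r),
            (g (i + 1) - y (thet i w T0 r + t + 1))) := by
    intro q hq
    rw [prod_cells_split hlam hi1 hT0]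
    congr 1
    · apply Finset.prod_congr rfl
      intro p hp
      have hnf : ¬ freeP i T0 p := (Finset.mem_filter.1 hp).2
      have : tab i w T0 (ext q) p = T0 p := by
        show (if freeP i T0 p then _ else T0 p) = T0 p
        rw [if_neg hnf]
      rw [this]
    · apply Finset.prod_congr rfl
      intro r _
      exact row_prod_tab hlam hi1 hT0 g y (hext q hq) r
  rw [Finset.sum_congr rfl step2, ← Finset.mul_sum]
  congr 1
  have hps := Finset.prod_sum (Finset.range k) (fun r => Finset.range (bm i w T0 r + 1))
    (fun r j => Pprod y (thet i w T0 r) (g i) j *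
      ∏ t ∈ Finset.Ico j (bm i w T0 r), (g (i + 1) - y (thet i w T0 r + t + 1)))
  have hFs : ∀ r, Fsum y (thet i w T0 r) (g i) (g (i + 1)) (bm i w T0 r) =
      ∑ j ∈ Finset.range (bm i w T0 r + 1),
        (Pprod y (thet i w T0 r) (g i) j *
          ∏ t ∈ Finset.Ico j (bm i w T0 r), (g (i + 1) - y (thet i w T0 r + t + 1))) := by
    intro r; rfl
  rw [Finset.prod_congr rfl (fun r _ => hFs r), hps]
  apply Finset.sum_congr rfl
  intro q hq
  rw [← Finset.prod_attach (Finset.range k)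
    (fun r => Pprod y (thet i w T0 r) (g i) (ext q r) *
      ∏ t ∈ Finset.Ico (ext q r) (bm i w T0 r), (g (i + 1) - y (thet i w T0 r + t + 1)))]
  apply Finset.prod_congr rfl
  intro xr _
  have : ext q xr.1 = q xr.1 xr.2 := by
    show (if h : xr.1 ∈ Finset.range k then q xr.1 h else 0) = q xr.1 xr.2
    rw [dif_pos xr.2]
  rw [this]

end FacSchurProof
namespace FacSchurProof
open Finset

variable {k w i : ℕ} {lam : ℕ → ℕ} {T0 : (ℕ × ℕ) → ℕ}

/-- Locked cells pair up and their product is symmetric under the swap. -/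
lemma C_swap (hlam : InBox k w lam) (hi1 : 1 ≤ i) (hik : i + 1 ≤ k)
    (hT0 : T0 ∈ SkewSSYT k k w (fun _ => 0) lam) (x : ℕ → ℝ) (y : ℤ → ℝ) :
    ∏ p ∈ (cells k w (fun _ => 0) lam).filter (fun p => ¬ freeP i T0 p),
      (x (Equiv.swap i (i + 1) (T0 p)) - y ((T0 p : ℤ) + (p.2 : ℤ) - (p.1 : ℤ))) =
    ∏ p ∈ (cells k w (fun _ => 0) lam).filter (fun p => ¬ freeP i T0 p),
      (x (T0 p) - y ((T0 p : ℤ) + (p.2 : ℤ) - (p.1 : ℤ))) := by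
  classical
  set NF := (cells k w (fun _ => 0) lam).filter (fun p => ¬ freeP i T0 p) with hNF
  set ψ : ℕ × ℕ → ℕ × ℕ := fun p =>
    if T0 p = i then (p.1 + 1, p.2) else if T0 p = i + 1 then (p.1 - 1, p.2) else p with hψ
  have key : ∀ p ∈ NF, (ψ p ∈ NF ∧ ψ (ψ p) = p ∧
      (x (Equiv.swap i (i + 1) (T0 p)) - y ((T0 p : ℤ) + (p.2 : ℤ) - (p.1 : ℤ)))
        = (x (T0 (ψ p)) - y ((T0 (ψ p) : ℤ) + ((ψ p).2 : ℤ) - ((ψ p).1 : ℤ)))) := by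
    rintro ⟨r, c⟩ hp
    rw [hNF, Finset.mem_filter] at hp
    obtain ⟨hm, hnf⟩ := hp
    by_cases hv : T0 (r, c) = i
    · -- locked i : partner below
      have hb : T0 (r + 1, c) = i + 1 := locked_i hT0 hv hnf
      have hm' : (r + 1, c) ∈ cells k w (fun _ => 0) lam := tmem hT0 (by omega)
      have hnf' : ¬ freeP i T0 (r + 1, c) := by
        rw [freeP_pair]
        rintro (⟨hv', _⟩ | ⟨_, hne⟩)
        · omega
        · simp only [Nat.add_sub_cancel] at hne; omega
      have hψp : ψ (r, c) = (r + 1, c) := by simp [hψ, hv]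
      refine ⟨?_, ?_, ?_⟩
      · rw [hψp, hNF, Finset.mem_filter]; exact ⟨hm', hnf'⟩
      · rw [hψp]
        simp [hψ, hb, (by omega : ¬ (i + 1 = i))]
      · rw [hψp, hv, hb, Equiv.swap_apply_left]
        congr 2
        push_cast
        ring
    · by_cases hv' : T0 (r, c) = i + 1
      · -- locked i+1 : partner above
        obtain ⟨hr, hb⟩ := locked_i1 hi1 hT0 hv' hnf
        have hm' : (r - 1, c) ∈ cells k w (fun _ => 0) lam :=
          cells_mono hlam hm (Nat.sub_le r 1) le_rfl
        have hre : r - 1 + 1 = r := by omega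
        have hnf' : ¬ freeP i T0 (r - 1, c) := by
          rw [freeP_pair]
          rintro (⟨_, hne⟩ | ⟨hv'', _⟩)
          · rw [hre] at hne; omega
          · omega
        have hψp : ψ (r, c) = (r - 1, c) := by simp [hψ, hv, hv']
        refine ⟨?_, ?_, ?_⟩
        · rw [hψp, hNF, Finset.mem_filter]; exact ⟨hm', hnf'⟩
        · rw [hψp]
          simp [hψ, hb, hre]
        · rw [hψp, hv', hb, Equiv.swap_apply_right]
          congr 2
          have h1 : ((r - 1 : ℕ) : ℤ) = (r : ℤ) - 1 := by omega
          push_cast [h1]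
          ring
      · have hψp : ψ (r, c) = (r, c) := by simp [hψ, hv, hv']
        refine ⟨by rw [hψp, hNF, Finset.mem_filter]; exact ⟨hm, hnf⟩, by rw [hψp, hψp], ?_⟩
        rw [hψp, Equiv.swap_apply_of_ne_of_ne hv hv']
  refine Finset.prod_nbij' ψ ψ ?_ ?_ ?_ ?_ ?_
  · exact fun p hp => (key p hp).1
  · exact fun p hp => (key p hp).1
  · exact fun p hp => (key p hp).2.1
  · exact fun p hp => (key p hp).2.1
  · exact fun p hp => (key p hp).2.2

/-- The adjacent transposition invariance. -/
lemma facSchur_swap_adj (hlam : InBox k w lam) (hi1 : 1 ≤ i) (hik : i + 1 ≤ k)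
    (x : ℕ → ℝ) (y : ℤ → ℝ) :
    facSchur k k w (fun _ => 0) lam (x ∘ (Equiv.swap i (i + 1))) y =
      facSchur k k w (fun _ => 0) lam x y := by
  classical
  unfold facSchur
  have hfin := ssyt_finite k k w (fun _ => 0) lam
  rw [← hfin.coe_toFinset, finsum_mem_coe_finset, finsum_mem_coe_finset]
  rw [← Finset.sum_fiberwise_of_maps_to
    (fun T hT => Finset.mem_image_of_mem (frame i) hT)
    (fun T => ∏ c ∈ cells k w (fun _ => 0) lam,
      ((x ∘ (Equiv.swap i (i + 1))) (T c) - y ((T c : ℤ) + (c.2 : ℤ) - (c.1 : ℤ))))]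
  rw [← Finset.sum_fiberwise_of_maps_to
    (fun T hT => Finset.mem_image_of_mem (frame i) hT)
    (fun T => ∏ c ∈ cells k w (fun _ => 0) lam,
      (x (T c) - y ((T c : ℤ) + (c.2 : ℤ) - (c.1 : ℤ))))]
  apply Finset.sum_congr rfl
  intro f hf
  obtain ⟨T0, hT0m, hfr⟩ := Finset.mem_image.1 hf
  have hT0 : T0 ∈ SkewSSYT k k w (fun _ => 0) lam := hfin.mem_toFinset.1 hT0m
  subst hfr
  have h1 := fiber_sum_factor hlam hi1 hik hT0 (x ∘ (Equiv.swap i (i + 1))) y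
  have h2 := fiber_sum_factor hlam hi1 hik hT0 x y
  rw [h1, h2]
  have hgi : (x ∘ (Equiv.swap i (i + 1))) i = x (i + 1) := by
    simp [Equiv.swap_apply_left]
  have hgi1 : (x ∘ (Equiv.swap i (i + 1))) (i + 1) = x i := by
    simp [Equiv.swap_apply_right]
  rw [hgi, hgi1]
  congr 1
  · -- the locked part
    have := C_swap hlam hi1 hik hT0 x y
    rw [← this]
    rfl
  · -- the free part
    apply Finset.prod_congr rfl
    intro r _
    exact Fsum_symm y (thet i w T0 r) (x (i + 1)) (x i) (bm i w T0 r)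

end FacSchurProof
namespace FacSchurProof
open Finset

variable {k w : ℕ} {lam : ℕ → ℕ} {y : ℤ → ℝ}

/-- Invariance of the factorial Schur function under a given permutation. -/
abbrev Good (k w : ℕ) (lam : ℕ → ℕ) (y : ℤ → ℝ) (σ : Equiv.Perm ℕ) : Prop :=
  ∀ x : ℕ → ℝ,
    facSchur k k w (fun _ => 0) lam (x ∘ σ) y = facSchur k k w (fun _ => 0) lam x y

lemma good_mul {σ τ : Equiv.Perm ℕ} (h1 : Good k w lam y σ) (h2 : Good k w lam y τ) :
    Good k w lam y (σ * τ) := by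
  intro x
  have hcomp : x ∘ (σ * τ : Equiv.Perm ℕ) = (x ∘ σ) ∘ τ := by
    funext j; simp [Equiv.Perm.mul_apply]
  rw [hcomp, h2 (x ∘ σ), h1 x]

lemma good_swap (hlam : InBox k w lam) :
    ∀ d a b : ℕ, b - a = d → 1 ≤ a → b ≤ k → a < b → Good k w lam y (Equiv.swap a b) := by
  intro d
  induction d using Nat.strong_induction_on with
  | _ d ih =>
    intro a b hd ha hb hab
    by_cases hadj : b = a + 1
    · subst hadj
      intro x
      exact facSchur_swap_adj hlam ha hb x y
    · have hb1 : a + 1 < b := by omega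
      rw [← Equiv.swap_mul_swap_mul_swap (by omega : b ≠ a + 1) (by omega : b ≠ a)]
      have g1 : Good k w lam y (Equiv.swap (a + 1) a) := by
        rw [Equiv.swap_comm]
        intro x
        exact facSchur_swap_adj hlam ha (by omega) x y
      have g2 : Good k w lam y (Equiv.swap b (a + 1)) := by
        rw [Equiv.swap_comm]
        exact ih (b - (a + 1)) (by omega) (a + 1) b rfl (by omega) hb (by omega)
      exact good_mul (good_mul g1 g2) g1

lemma good_perm (hlam : InBox k w lam) :
    ∀ m (σ : Equiv.Perm ℕ), (∀ j, 1 ≤ j → j ≤ k → 1 ≤ σ j ∧ σ j ≤ k) →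
      (∀ j, ¬(1 ≤ j ∧ j ≤ k) → σ j = j) →
      ((Finset.Icc 1 k).filter (fun j => σ j ≠ j)).card ≤ m → Good k w lam y σ := by
  intro m
  induction m with
  | zero =>
    intro σ hσ hfix hcard
    have hall : ∀ j, σ j = j := by
      intro j
      by_cases hj : 1 ≤ j ∧ j ≤ k
      · by_contra hne
        have hmem : j ∈ (Finset.Icc 1 k).filter (fun j => σ j ≠ j) :=
          Finset.mem_filter.2 ⟨Finset.mem_Icc.2 hj, hne⟩
        have := Finset.card_pos.2 ⟨j, hmem⟩
        omega
      · exact hfix j hj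
    intro x
    have hxσ : x ∘ σ = x := by funext j; simp [hall j]
    rw [hxσ]
  | succ m ih =>
    intro σ hσ hfix hcard
    by_cases hid : ∀ j ∈ Finset.Icc 1 k, σ j = j
    · refine ih σ hσ hfix ?_
      have : (Finset.Icc 1 k).filter (fun j => σ j ≠ j) = ∅ :=
        Finset.filter_eq_empty_iff.2 (fun j hj => not_not.2 (hid j hj))
      rw [this]
      simp
    · push_neg at hid
      obtain ⟨j, hjm, hj⟩ := hid
      have hjk : 1 ≤ j ∧ j ≤ k := Finset.mem_Icc.1 hjm
      set b := σ j with hbdef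
      have hbk := hσ j hjk.1 hjk.2
      have hbj : b ≠ j := fun h => hj h
      set τ := Equiv.swap j b * σ with hτ
      have hστ : σ = Equiv.swap j b * τ := by
        rw [hτ, ← mul_assoc, Equiv.swap_mul_self, one_mul]
      have hτσfix : ∀ x, σ x = x → τ x = x := by
        intro x hx
        have hxj : x ≠ j := by
          intro h
          subst h
          exact hj (hbdef.trans hx)
        have hxb : x ≠ b := by
          intro h
          have hxe : x = j := σ.injective (by rw [hx, h])
          omega
        show Equiv.swap j b (σ x) = x
        rw [hx]
        exact Equiv.swap_apply_of_ne_of_ne hxj hxb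
      have hτj : τ j = j := by
        show Equiv.swap j b (σ j) = j
        rw [← hbdef]
        exact Equiv.swap_apply_right j b
      have hτσ' : ∀ x, 1 ≤ x → x ≤ k → 1 ≤ τ x ∧ τ x ≤ k := by
        intro x h1 h2
        show 1 ≤ Equiv.swap j b (σ x) ∧ Equiv.swap j b (σ x) ≤ k
        by_cases hja : σ x = j
        · rw [hja, Equiv.swap_apply_left]; exact hbk
        · by_cases hba : σ x = b
          · rw [hba, Equiv.swap_apply_right]; exact hjk
          · rw [Equiv.swap_apply_of_ne_of_ne hja hba]; exact hσ x h1 h2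
      have hτfix : ∀ x, ¬(1 ≤ x ∧ x ≤ k) → τ x = x := fun x hx => hτσfix x (hfix x hx)
      have hsub : (Finset.Icc 1 k).filter (fun x => τ x ≠ x) ⊆
          ((Finset.Icc 1 k).filter (fun x => σ x ≠ x)).erase j := by
        intro x hx
        rcases Finset.mem_filter.1 hx with ⟨hx1, hx2⟩
        refine Finset.mem_erase.2 ⟨?_, Finset.mem_filter.2 ⟨hx1, ?_⟩⟩
        · intro h; subst h; exact hx2 hτj
        · intro h; exact hx2 (hτσfix x h)
      have hcard' : ((Finset.Icc 1 k).filter (fun x => τ x ≠ x)).card ≤ m := by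
        have hjmem : j ∈ (Finset.Icc 1 k).filter (fun x => σ x ≠ x) :=
          Finset.mem_filter.2 ⟨hjm, hj⟩
        have h1 := Finset.card_le_card hsub
        rw [Finset.card_erase_of_mem hjmem] at h1
        omega
      have hgoodτ := ih τ hτσ' hτfix hcard'
      have hgoodswap : Good k w lam y (Equiv.swap j b) := by
        rcases lt_or_gt_of_ne hbj with hlt | hgt
        · rw [Equiv.swap_comm]
          exact good_swap hlam (j - b) b j rfl hbk.1 hjk.2 hlt
        · exact good_swap hlam (b - j) j b rfl hjk.1 hbk.2 hgt
      rw [hστ]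
      exact good_mul hgoodswap hgoodτ

end FacSchurProof


/-- the factorial Schur function
`s_λ(x|y) = Σ_T Π_b (x_{T(b)} - y_{T(b)+c(b)})` is a symmetric function of
`x_1, …, x_k`: it is invariant under any permutation of `{1, …, k}`. -/
theorem facSchur_symmetric (n k : ℕ) (hk : k ≤ n) (lam : ℕ → ℕ)
    (hlam : InBox k (n - k) lam) (x : ℕ → ℝ) (y : ℤ → ℝ)
    (σ : Equiv.Perm ℕ) (hσ : ∀ i, 1 ≤ i → i ≤ k → 1 ≤ σ i ∧ σ i ≤ k)
    (hfix : ∀ i, ¬(1 ≤ i ∧ i ≤ k) → σ i = i) :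
    facSchur k k (n - k) (fun _ => 0) lam (x ∘ σ) y =
      facSchur k k (n - k) (fun _ => 0) lam x y :=
  FacSchurProof.good_perm hlam (((Finset.Icc 1 k).filter (fun j => σ j ≠ j)).card)
    σ hσ hfix le_rfl x
end
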